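/- arXiv:2604.08911 — 5 statements merged into one kernel-verified Lean document; each statement's English description precedes it below -/
import Mathlib

section
/- Let ν be a Borel probability measure on ℝ^D with finite second moment. Then W₂(ν^int, ν) = 0 (equivalently ν^int = ν) if and only if ν = δ_p is a Dirac mass at some point p ∈ ℝ^D. -/
open MeasureTheory Metric Set
open scoped ENNReal NNReal

noncomputable section

/-- The Euclidean space `ℝ^D`. -/
abbrev Euc (D : ℕ) := EuclideanSpace ℝ (Fin D)

/-- Squared quadratic Wasserstein distance `W₂²(μ,ν)`: the infimum over all couplings
`π` of `μ` and `ν` (probability measures on the product whose marginals are `μ` and `ν`)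
of the transport cost `∫ ‖x-y‖² dπ`. -/
noncomputable def W2sq {D : ℕ} (μ ν : Measure (Euc D)) : ℝ≥0∞ :=
  ⨅ (π : Measure (Euc D × Euc D)) (_ : π.map Prod.fst = μ) (_ : π.map Prod.snd = ν),
    ∫⁻ p, (‖p.1 - p.2‖₊ : ℝ≥0∞) ^ 2 ∂π

/-- The quadratic Wasserstein distance `W₂(μ,ν)`. -/
noncomputable def W2 {D : ℕ} (μ ν : Measure (Euc D)) : ℝ≥0∞ := (W2sq μ ν) ^ (1/2 : ℝ)

/-- The interpolation measure `ν^int`: the law of `Λ•X + (1−Λ)•Y`, where `X, Y` are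
independent with law `ν` and `Λ` is uniform on `[0,1]`, independent of `(X,Y)`. -/
noncomputable def interp {D : ℕ} (ν : Measure (Euc D)) : Measure (Euc D) :=
  ((volume.restrict (Icc (0:ℝ) 1)).prod (ν.prod ν)).map
    (fun p => p.1 • p.2.1 + (1 - p.1) • p.2.2)

set_option linter.unusedSectionVars false

lemma interp_dirac {D : ℕ} (p : Euc D) : interp (Measure.dirac p) = Measure.dirac p := by
  have hT : Measurable (fun q : ℝ × (Euc D × Euc D) => q.1 • q.2.1 + (1 - q.1) • q.2.2) := by
    fun_prop
  have hprob : IsProbabilityMeasure (volume.restrict (Icc (0:ℝ) 1)) := ⟨by simp⟩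
  rw [interp, Measure.dirac_prod_dirac, Measure.prod_dirac,
    Measure.map_map hT (by fun_prop)]
  have : ((fun q : ℝ × (Euc D × Euc D) => q.1 • q.2.1 + (1 - q.1) • q.2.2) ∘
      fun x : ℝ => (x, (p, p))) = fun _ => p := by
    funext x
    simp [Function.comp, ← add_smul]
  rw [this, Measure.map_const]
  simp

lemma W2_self_dirac {D : ℕ} (p : Euc D) : W2 (Measure.dirac p) (Measure.dirac p) = 0 := by
  have h : W2sq (Measure.dirac p) (Measure.dirac p) = 0 := by
    refine le_antisymm ?_ zero_le
    refine iInf_le_of_le (Measure.dirac (p, p)) ?_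
    refine iInf_le_of_le (Measure.map_dirac' measurable_fst _) ?_
    refine iInf_le_of_le (Measure.map_dirac' measurable_snd _) ?_
    rw [lintegral_dirac' _ (by fun_prop)]
    simp
  rw [W2, h, ENNReal.zero_rpow_of_pos (by norm_num)]

lemma secondMoment_eq_of_W2sq_eq_zero {D : ℕ} {μ ν : Measure (Euc D)}
    (h : W2sq μ ν = 0) (hS : (∫⁻ x, (‖x‖₊ : ℝ≥0∞) ^ 2 ∂ν) < ⊤) :
    ∫⁻ x, (‖x‖₊ : ℝ≥0∞) ^ 2 ∂μ = ∫⁻ x, (‖x‖₊ : ℝ≥0∞) ^ 2 ∂ν := by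
  set M := ∫⁻ x, (‖x‖₊ : ℝ≥0∞) ^ 2 ∂μ with hMdef
  set S := ∫⁻ x, (‖x‖₊ : ℝ≥0∞) ^ 2 ∂ν with hSdef
  have key : ∀ ε : ℝ≥0, 0 < ε →
      M ^ (1/2 : ℝ) ≤ S ^ (1/2 : ℝ) + ε ∧ S ^ (1/2 : ℝ) ≤ M ^ (1/2 : ℝ) + ε := by
    intro ε hε
    have hpos : (0 : ℝ≥0∞) < (ε : ℝ≥0∞) ^ 2 := by positivity
    have hlt : W2sq μ ν < (ε : ℝ≥0∞) ^ 2 := h ▸ hpos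
    rw [W2sq] at hlt
    simp only [iInf_lt_iff] at hlt
    obtain ⟨π, h1, h2, hcost⟩ := hlt
    have hM' : M = ∫⁻ p : Euc D × Euc D, (‖p.1‖₊ : ℝ≥0∞) ^ 2 ∂π := by
      rw [hMdef, ← h1, lintegral_map (by fun_prop) measurable_fst]
    have hS' : S = ∫⁻ p : Euc D × Euc D, (‖p.2‖₊ : ℝ≥0∞) ^ 2 ∂π := by
      rw [hSdef, ← h2, lintegral_map (by fun_prop) measurable_snd]
    have hcost' : (∫⁻ p : Euc D × Euc D, (‖p.1 - p.2‖₊ : ℝ≥0∞) ^ 2 ∂π) ^ (1/2 : ℝ)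
        ≤ (ε : ℝ≥0∞) := by
      calc (∫⁻ p : Euc D × Euc D, (‖p.1 - p.2‖₊ : ℝ≥0∞) ^ 2 ∂π) ^ (1/2 : ℝ)
          ≤ ((ε : ℝ≥0∞) ^ 2) ^ (1/2 : ℝ) :=
        ENNReal.rpow_le_rpow hcost.le (by norm_num)
        _ = (ε : ℝ≥0∞) := by
          rw [← ENNReal.rpow_natCast _ 2, ← ENNReal.rpow_mul]
          norm_num
    have mink : ∀ f g : Euc D × Euc D → ℝ≥0, Measurable f → Measurable g →
        (∀ p, f p ≤ g p + ‖p.1 - p.2‖₊) →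
        (∫⁻ p, (f p : ℝ≥0∞) ^ 2 ∂π) ^ (1/2 : ℝ) ≤
          (∫⁻ p, (g p : ℝ≥0∞) ^ 2 ∂π) ^ (1/2 : ℝ) + (ε : ℝ≥0∞) := by
      intro f g hf hg hfg
      have conv2 : ∀ x : ℝ≥0∞, x ^ (2:ℕ) = x ^ (2:ℝ) := fun x => by
        rw [← ENNReal.rpow_natCast x 2]; norm_num
      have step1 : (∫⁻ p, (f p : ℝ≥0∞) ^ 2 ∂π) ≤
          ∫⁻ p, ((g p : ℝ≥0∞) + (‖p.1 - p.2‖₊ : ℝ≥0∞)) ^ 2 ∂π := by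
        refine lintegral_mono fun p => ?_
        have h0 : (f p : ℝ≥0∞) ≤ (g p : ℝ≥0∞) + (‖p.1 - p.2‖₊ : ℝ≥0∞) := by
          exact_mod_cast hfg p
        gcongr
      have step2 := ENNReal.lintegral_Lp_add_le (μ := π)
        (f := fun p => (g p : ℝ≥0∞)) (g := fun p => (‖p.1 - p.2‖₊ : ℝ≥0∞))
        (by fun_prop) (by fun_prop) (p := 2) one_le_two
      calc (∫⁻ p, (f p : ℝ≥0∞) ^ 2 ∂π) ^ (1/2 : ℝ)
          ≤ (∫⁻ p, ((g p : ℝ≥0∞) + (‖p.1 - p.2‖₊ : ℝ≥0∞)) ^ 2 ∂π) ^ (1/2 : ℝ) :=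
            ENNReal.rpow_le_rpow step1 (by norm_num)
        _ ≤ (∫⁻ p, (g p : ℝ≥0∞) ^ 2 ∂π) ^ (1/2 : ℝ) +
            (∫⁻ p, (‖p.1 - p.2‖₊ : ℝ≥0∞) ^ 2 ∂π) ^ (1/2 : ℝ) := by
            simp only [conv2]
            simpa using step2
        _ ≤ (∫⁻ p, (g p : ℝ≥0∞) ^ 2 ∂π) ^ (1/2 : ℝ) + (ε : ℝ≥0∞) := by
            gcongr
    constructor
    · rw [hM', hS']
      exact mink (fun p => ‖p.1‖₊) (fun p => ‖p.2‖₊) (by fun_prop) (by fun_prop)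
        (fun p => nnnorm_le_nnnorm_add_nnnorm_sub' p.1 p.2)
    · rw [hM', hS']
      exact mink (fun p => ‖p.2‖₊) (fun p => ‖p.1‖₊) (by fun_prop) (by fun_prop)
        (fun p => nnnorm_le_nnnorm_add_nnnorm_sub p.1 p.2)
  have hSfin : S ^ (1/2 : ℝ) < ⊤ := ENNReal.rpow_lt_top_of_nonneg (by norm_num) hS.ne
  have hle1 : M ^ (1/2 : ℝ) ≤ S ^ (1/2 : ℝ) :=
    ENNReal.le_of_forall_pos_le_add fun ε hε _ => (key ε hε).1
  have hle2 : S ^ (1/2 : ℝ) ≤ M ^ (1/2 : ℝ) :=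
    ENNReal.le_of_forall_pos_le_add fun ε hε _ => (key ε hε).2
  have heq : M ^ (1/2 : ℝ) = S ^ (1/2 : ℝ) := le_antisymm hle1 hle2
  have h2 := congrArg (fun x : ℝ≥0∞ => x ^ (2 : ℝ)) heq
  simp only [← ENNReal.rpow_mul] at h2
  norm_num at h2
  exact h2

section moments

variable {D : ℕ} (ν : Measure (Euc D)) [IsProbabilityMeasure ν]

lemma sq_norm_integrable (hmom : (∫⁻ x, (‖x‖₊ : ℝ≥0∞) ^ 2 ∂ν) < ⊤) :
    Integrable (fun x : Euc D => ‖x‖ ^ 2) ν := by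
  refine ⟨(continuous_norm.pow 2).aestronglyMeasurable, ?_⟩
  rw [hasFiniteIntegral_iff_ofReal (ae_of_all _ fun x => sq_nonneg _)]
  have : ∀ x : Euc D, ENNReal.ofReal (‖x‖ ^ 2) = (‖x‖₊ : ℝ≥0∞) ^ 2 := fun x => by
    rw [ENNReal.ofReal_pow (norm_nonneg x), ofReal_norm, enorm_eq_nnnorm]
  simpa only [this] using hmom

lemma id_integrable (hmom : (∫⁻ x, (‖x‖₊ : ℝ≥0∞) ^ 2 ∂ν) < ⊤) :
    Integrable (fun x : Euc D => x) ν := by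
  have hb : Integrable (fun x : Euc D => 1 + ‖x‖ ^ 2) ν :=
    (integrable_const 1).add (sq_norm_integrable ν hmom)
  refine hb.mono aestronglyMeasurable_id (ae_of_all _ fun x => ?_)
  have h1 : (0:ℝ) ≤ ‖x‖ := norm_nonneg x
  have : ‖x‖ ≤ 1 + ‖x‖ ^ 2 := by nlinarith
  calc ‖x‖ ≤ 1 + ‖x‖ ^ 2 := this
    _ ≤ ‖1 + ‖x‖ ^ 2‖ := le_abs_self _

lemma expand_sq (l : ℝ) (x y : Euc D) :
    ‖l • x + (1 - l) • y‖ ^ 2 =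
      l ^ 2 * ‖x‖ ^ 2 + (2 * l * (1 - l)) * (inner ℝ x y : ℝ) + (1 - l) ^ 2 * ‖y‖ ^ 2 := by
  rw [norm_add_sq_real, real_inner_smul_left, real_inner_smul_right, norm_smul, norm_smul]
  simp only [Real.norm_eq_abs, mul_pow, sq_abs]
  ring

lemma inner_prod_integrable (hmom : (∫⁻ x, (‖x‖₊ : ℝ≥0∞) ^ 2 ∂ν) < ⊤) :
    Integrable (fun w : Euc D × Euc D => (inner ℝ w.1 w.2 : ℝ)) (ν.prod ν) := by
  have hx : Integrable (fun w : Euc D × Euc D => ‖w.1‖ ^ 2) (ν.prod ν) := by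
    simpa using (sq_norm_integrable ν hmom).mul_prod (integrable_const (1:ℝ))
  have hy : Integrable (fun w : Euc D × Euc D => ‖w.2‖ ^ 2) (ν.prod ν) := by
    simpa using (integrable_const (1:ℝ)).mul_prod (sq_norm_integrable ν hmom)
  refine (hx.add hy).mono ?_ (ae_of_all _ fun w => ?_)
  · exact (Continuous.inner continuous_fst continuous_snd).aestronglyMeasurable
  · have h1 := abs_real_inner_le_norm w.1 w.2
    have h2 : ‖w.1‖ * ‖w.2‖ ≤ ‖w.1‖ ^ 2 + ‖w.2‖ ^ 2 := by nlinarith [norm_nonneg w.1, norm_nonneg w.2, sq_nonneg (‖w.1‖ - ‖w.2‖)]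
    rw [Real.norm_eq_abs]
    calc |(inner ℝ w.1 w.2 : ℝ)| ≤ ‖w.1‖ * ‖w.2‖ := h1
      _ ≤ ‖w.1‖ ^ 2 + ‖w.2‖ ^ 2 := h2
      _ ≤ ‖‖w.1‖ ^ 2 + ‖w.2‖ ^ 2‖ := le_abs_self _

lemma integral_inner_prod (hmom : (∫⁻ x, (‖x‖₊ : ℝ≥0∞) ^ 2 ∂ν) < ⊤) :
    ∫ w : Euc D × Euc D, (inner ℝ w.1 w.2 : ℝ) ∂(ν.prod ν) = ‖∫ x, x ∂ν‖ ^ 2 := by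
  have hid := id_integrable ν hmom
  rw [integral_prod _ (inner_prod_integrable ν hmom)]
  have h1 : ∀ x : Euc D, ∫ y, (inner ℝ x y : ℝ) ∂ν = (inner ℝ x (∫ y, y ∂ν) : ℝ) := fun x =>
    integral_inner hid x
  simp only [h1]
  have h2 : ∀ x : Euc D, (inner ℝ x (∫ y, y ∂ν) : ℝ) = (inner ℝ (∫ y, y ∂ν) x : ℝ) := fun x =>
    real_inner_comm _ _
  simp only [h2]
  rw [integral_inner hid, real_inner_self_eq_norm_sq]

lemma lam_int_1 : ∫ l in Icc (0:ℝ) 1, l ^ 2 = 1/3 := by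
  rw [MeasureTheory.integral_Icc_eq_integral_Ioc,
    ← intervalIntegral.integral_of_le (zero_le_one (α := ℝ)), integral_pow]
  norm_num

lemma lam_int_2 : ∫ l in Icc (0:ℝ) 1, 2 * l * (1 - l) = 1/3 := by
  rw [MeasureTheory.integral_Icc_eq_integral_Ioc,
    ← intervalIntegral.integral_of_le (zero_le_one (α := ℝ))]
  have : (fun l : ℝ => 2 * l * (1 - l)) = fun l : ℝ => 2 * l - 2 * l ^ 2 := by
    funext l; ring
  rw [this, intervalIntegral.integral_sub
    ((by fun_prop : Continuous fun l : ℝ => 2 * l).intervalIntegrable 0 1)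
    ((by fun_prop : Continuous fun l : ℝ => 2 * l ^ 2).intervalIntegrable 0 1),
    intervalIntegral.integral_const_mul, intervalIntegral.integral_const_mul,
    integral_id, integral_pow]
  norm_num

lemma lam_int_3 : ∫ l in Icc (0:ℝ) 1, (1 - l) ^ 2 = 1/3 := by
  rw [MeasureTheory.integral_Icc_eq_integral_Ioc,
    ← intervalIntegral.integral_of_le (zero_le_one (α := ℝ))]
  have : (fun l : ℝ => (1 - l) ^ 2) = fun l : ℝ => 1 - 2 * l + l ^ 2 := by
    funext l; ring
  rw [this]
  rw [intervalIntegral.integral_add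
    ((by fun_prop : Continuous fun l : ℝ => 1 - 2 * l).intervalIntegrable 0 1)
    ((by fun_prop : Continuous fun l : ℝ => l ^ 2).intervalIntegrable 0 1),
    intervalIntegral.integral_sub (intervalIntegrable_const)
    ((by fun_prop : Continuous fun l : ℝ => 2 * l).intervalIntegrable 0 1),
    intervalIntegral.integral_const_mul, integral_id, integral_pow]
  norm_num

lemma interp_second_moment (hmom : (∫⁻ x, (‖x‖₊ : ℝ≥0∞) ^ 2 ∂ν) < ⊤) :
    ∫⁻ z, (‖z‖₊ : ℝ≥0∞) ^ 2 ∂(interp ν) =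
      ENNReal.ofReal ((2/3) * (∫ x, ‖x‖ ^ 2 ∂ν) + (1/3) * ‖∫ x, x ∂ν‖ ^ 2) := by
  classical
  set μΛ := volume.restrict (Icc (0:ℝ) 1) with hμΛ
  haveI hprobΛ : IsProbabilityMeasure μΛ := ⟨by simp [hμΛ]⟩
  set P := μΛ.prod (ν.prod ν) with hP
  set T : ℝ × (Euc D × Euc D) → Euc D := fun p => p.1 • p.2.1 + (1 - p.1) • p.2.2 with hT
  have hTm : Measurable T := by fun_prop
  have hS2 := sq_norm_integrable ν hmom
  set S : ℝ := ∫ x, ‖x‖ ^ 2 ∂ν with hSdef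
  set m : Euc D := ∫ x, x ∂ν with hmdef
  -- integrability of the three pieces
  have hf1 : Integrable (fun l : ℝ => l ^ 2) μΛ := (continuous_pow 2).integrableOn_Icc
  have hf2 : Integrable (fun l : ℝ => 2 * l * (1 - l)) μΛ :=
    (by fun_prop : Continuous fun l : ℝ => 2 * l * (1 - l)).integrableOn_Icc
  have hf3 : Integrable (fun l : ℝ => (1 - l) ^ 2) μΛ :=
    (by fun_prop : Continuous fun l : ℝ => (1 - l) ^ 2).integrableOn_Icc
  have hgx : Integrable (fun w : Euc D × Euc D => ‖w.1‖ ^ 2) (ν.prod ν) := by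
    simpa using hS2.mul_prod (integrable_const (1:ℝ))
  have hgy : Integrable (fun w : Euc D × Euc D => ‖w.2‖ ^ 2) (ν.prod ν) := by
    simpa using (integrable_const (1:ℝ)).mul_prod hS2
  have hinner := inner_prod_integrable ν hmom
  have hA : Integrable (fun z : ℝ × (Euc D × Euc D) => z.1 ^ 2 * ‖z.2.1‖ ^ 2) P :=
    hf1.mul_prod hgx
  have hB : Integrable
      (fun z : ℝ × (Euc D × Euc D) => (2 * z.1 * (1 - z.1)) * (inner ℝ z.2.1 z.2.2 : ℝ)) P :=
    hf2.mul_prod hinner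
  have hC : Integrable (fun z : ℝ × (Euc D × Euc D) => (1 - z.1) ^ 2 * ‖z.2.2‖ ^ 2) P :=
    hf3.mul_prod hgy
  have hexp : ∀ z : ℝ × (Euc D × Euc D), ‖T z‖ ^ 2 =
      z.1 ^ 2 * ‖z.2.1‖ ^ 2 + (2 * z.1 * (1 - z.1)) * (inner ℝ z.2.1 z.2.2 : ℝ)
        + (1 - z.1) ^ 2 * ‖z.2.2‖ ^ 2 := fun z => expand_sq z.1 z.2.1 z.2.2
  have hAB : Integrable (fun z : ℝ × (Euc D × Euc D) =>
      z.1 ^ 2 * ‖z.2.1‖ ^ 2 + (2 * z.1 * (1 - z.1)) * (inner ℝ z.2.1 z.2.2 : ℝ)) P :=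
    hA.add hB
  have hABC : Integrable (fun z : ℝ × (Euc D × Euc D) =>
      z.1 ^ 2 * ‖z.2.1‖ ^ 2 + (2 * z.1 * (1 - z.1)) * (inner ℝ z.2.1 z.2.2 : ℝ)
        + (1 - z.1) ^ 2 * ‖z.2.2‖ ^ 2) P := hAB.add hC
  have hInt : Integrable (fun z => ‖T z‖ ^ 2) P :=
    hABC.congr (ae_of_all _ fun z => (hexp z).symm)
  -- the real-valued integral
  have hreal : ∫ z, ‖T z‖ ^ 2 ∂P = (2/3) * S + (1/3) * ‖m‖ ^ 2 := by
    have h1 : ∫ z, ‖T z‖ ^ 2 ∂P = (∫ z : ℝ × (Euc D × Euc D), z.1 ^ 2 * ‖z.2.1‖ ^ 2 ∂P)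
        + (∫ z : ℝ × (Euc D × Euc D), (2 * z.1 * (1 - z.1)) * (inner ℝ z.2.1 z.2.2 : ℝ) ∂P)
        + (∫ z : ℝ × (Euc D × Euc D), (1 - z.1) ^ 2 * ‖z.2.2‖ ^ 2 ∂P) := by
      rw [show (fun z => ‖T z‖ ^ 2) = fun z : ℝ × (Euc D × Euc D) =>
        z.1 ^ 2 * ‖z.2.1‖ ^ 2 + (2 * z.1 * (1 - z.1)) * (inner ℝ z.2.1 z.2.2 : ℝ)
        + (1 - z.1) ^ 2 * ‖z.2.2‖ ^ 2 from funext hexp]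
      rw [integral_add hAB hC, integral_add hA hB]
    have hAx : (∫ z : ℝ × (Euc D × Euc D), z.1 ^ 2 * ‖z.2.1‖ ^ 2 ∂P) = (1/3) * S := by
      rw [hP, integral_prod_mul (f := fun l : ℝ => l ^ 2)
        (g := fun w : Euc D × Euc D => ‖w.1‖ ^ 2), lam_int_1,
        integral_fun_fst (f := fun x : Euc D => ‖x‖ ^ 2)]
      simp [hSdef]
    have hBx : (∫ z : ℝ × (Euc D × Euc D),
        (2 * z.1 * (1 - z.1)) * (inner ℝ z.2.1 z.2.2 : ℝ) ∂P) = (1/3) * ‖m‖ ^ 2 := by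
      rw [hP, integral_prod_mul (f := fun l : ℝ => 2 * l * (1 - l))
        (g := fun w : Euc D × Euc D => (inner ℝ w.1 w.2 : ℝ)), lam_int_2,
        integral_inner_prod ν hmom]
    have hCx : (∫ z : ℝ × (Euc D × Euc D), (1 - z.1) ^ 2 * ‖z.2.2‖ ^ 2 ∂P) = (1/3) * S := by
      rw [hP, integral_prod_mul (f := fun l : ℝ => (1 - l) ^ 2)
        (g := fun w : Euc D × Euc D => ‖w.2‖ ^ 2), lam_int_3,
        integral_fun_snd (f := fun x : Euc D => ‖x‖ ^ 2)]
      simp [hSdef]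
    rw [h1, hAx, hBx, hCx]; ring
  -- convert to lintegral
  have hmap : ∫⁻ z, (‖z‖₊ : ℝ≥0∞) ^ 2 ∂(interp ν) = ∫⁻ z, (‖T z‖₊ : ℝ≥0∞) ^ 2 ∂P := by
    rw [interp, lintegral_map (by fun_prop) hTm]
  rw [hmap]
  have : ∀ z, ((‖T z‖₊ : ℝ≥0∞)) ^ 2 = ENNReal.ofReal (‖T z‖ ^ 2) := fun z => by
    rw [ENNReal.ofReal_pow (norm_nonneg _), ofReal_norm, enorm_eq_nnnorm]
  simp only [this]
  rw [← MeasureTheory.ofReal_integral_eq_lintegral_ofReal hInt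
    (ae_of_all _ fun z => sq_nonneg _), hreal]


lemma eq_dirac_of_moments (hmom : (∫⁻ x, (‖x‖₊ : ℝ≥0∞) ^ 2 ∂ν) < ⊤)
    (hSm : ∫ x, ‖x‖ ^ 2 ∂ν = ‖∫ x : Euc D, x ∂ν‖ ^ 2) :
    ∃ p : Euc D, ν = Measure.dirac p := by
  refine ⟨∫ x : Euc D, x ∂ν, ?_⟩
  set m : Euc D := ∫ x : Euc D, x ∂ν with hmdef
  have hS2 := sq_norm_integrable ν hmom
  have hid := id_integrable ν hmom
  have hinner_m : Integrable (fun x : Euc D => (inner ℝ x m : ℝ)) ν := hid.inner_const m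
  have hexp : ∀ x : Euc D, ‖x - m‖ ^ 2 = ‖x‖ ^ 2 - 2 * (inner ℝ x m : ℝ) + ‖m‖ ^ 2 :=
    fun x => norm_sub_sq_real x m
  have hIntsub : Integrable (fun x : Euc D =>
      ‖x‖ ^ 2 - 2 * (inner ℝ x m : ℝ) + ‖m‖ ^ 2) ν :=
    (hS2.sub (hinner_m.const_mul 2)).add (integrable_const _)
  have hvar0 : Integrable (fun x : Euc D => ‖x - m‖ ^ 2) ν :=
    hIntsub.congr (ae_of_all _ fun x => (hexp x).symm)
  have hintinner : ∫ x, (inner ℝ x m : ℝ) ∂ν = ‖m‖ ^ 2 := by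
    have hc : (fun x : Euc D => (inner ℝ x m : ℝ)) = fun x : Euc D => (inner ℝ m x : ℝ) :=
      funext fun x => real_inner_comm m x
    rw [hc, integral_inner hid, ← hmdef, real_inner_self_eq_norm_sq]
  have hsub : Integrable (fun x : Euc D => ‖x‖ ^ 2 - 2 * (inner ℝ x m : ℝ)) ν :=
    hS2.sub (hinner_m.const_mul 2)
  have hvar : ∫ x, ‖x - m‖ ^ 2 ∂ν = 0 := by
    rw [show (fun x : Euc D => ‖x - m‖ ^ 2) = fun x : Euc D =>
      ‖x‖ ^ 2 - 2 * (inner ℝ x m : ℝ) + ‖m‖ ^ 2 from funext hexp,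
      integral_add hsub (integrable_const _),
      integral_sub hS2 (hinner_m.const_mul 2), MeasureTheory.integral_const_mul, hintinner,
      integral_const, probReal_univ]
    simp only [ENNReal.toReal_one, smul_eq_mul, one_mul]
    linarith [hSm]
  have hae : ∀ᵐ x ∂ν, x = m := by
    have h0 := (integral_eq_zero_iff_of_nonneg (fun x => sq_nonneg _) hvar0).mp hvar
    filter_upwards [h0] with x hx
    have : ‖x - m‖ ^ 2 = 0 := hx
    have : ‖x - m‖ = 0 := by
      exact pow_eq_zero_iff (two_ne_zero) |>.mp this
    rw [norm_eq_zero, sub_eq_zero] at this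
    exact this
  have hmap : ν.map (fun x => x) = ν.map (fun _ => m) :=
    Measure.map_congr (by filter_upwards [hae] with x hx using hx)
  rw [Measure.map_id'] at hmap
  rw [hmap, Measure.map_const, measure_univ, one_smul]

end moments

/-- for a probability measure `ν` on `ℝ^D` with finite second moment,
`W₂(ν^int, ν) = 0` if and only if `ν` is a Dirac mass at some point. -/
theorem interp_fixed_iff_dirac
    (D : ℕ) (ν : Measure (Euc D)) (hprob : IsProbabilityMeasure ν)
    (hmom : (∫⁻ x, (‖x‖₊ : ℝ≥0∞) ^ 2 ∂ν) < ⊤) :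
    W2 (interp ν) ν = 0 ↔ ∃ p : Euc D, ν = Measure.dirac p := by
  haveI := hprob
  constructor
  · intro h
    have hsq : W2sq (interp ν) ν = 0 := by
      rcases ENNReal.rpow_eq_zero_iff.mp h with ⟨h0, _⟩ | ⟨_, hneg⟩
      · exact h0
      · norm_num at hneg
    have hMS := secondMoment_eq_of_W2sq_eq_zero hsq hmom
    have hM := interp_second_moment ν hmom
    have hSof : (∫⁻ x, (‖x‖₊ : ℝ≥0∞) ^ 2 ∂ν) = ENNReal.ofReal (∫ x, ‖x‖ ^ 2 ∂ν) := by
      rw [MeasureTheory.ofReal_integral_eq_lintegral_ofReal (sq_norm_integrable ν hmom)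
        (ae_of_all _ fun x => sq_nonneg _)]
      refine lintegral_congr fun x => ?_
      rw [ENNReal.ofReal_pow (norm_nonneg x), ofReal_norm, enorm_eq_nnnorm]
    rw [hM, hSof] at hMS
    have hSnn : (0:ℝ) ≤ ∫ x, ‖x‖ ^ 2 ∂ν := integral_nonneg fun x => sq_nonneg _
    have hnn1 : (0:ℝ) ≤ (2/3) * (∫ x, ‖x‖ ^ 2 ∂ν) + (1/3) * ‖∫ x : Euc D, x ∂ν‖ ^ 2 := by
      positivity
    have heq := (ENNReal.ofReal_eq_ofReal_iff hnn1 hSnn).mp hMS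
    have hSm : ∫ x, ‖x‖ ^ 2 ∂ν = ‖∫ x : Euc D, x ∂ν‖ ^ 2 := by linarith
    exact eq_dirac_of_moments ν hmom hSm
  · rintro ⟨p, rfl⟩
    rw [interp_dirac]
    exact W2_self_dirac p
end
end

section
/- Let ν = g·Leb be a Borel probability measure on ℝ^D with g ∈ L¹(ℝ^D), g ≥ 0, and g compactly supported (extended by zero outside its support). Then the interpolation measure ν^int is absolutely continuous with respect to Lebesgue measure, and for almost every z ∈ ℝ^D its density equals g^int(z) = ∫₀¹ (1−λ)^{−D} ∫_{ℝ^D} g(x) g((z−λx)/(1−λ)) dx dλ. Moreover, if K = supp(ν) is convex, then supp(ν^int) ⊆ K. -/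
open MeasureTheory Metric Set
open scoped ENNReal NNReal

noncomputable section

/-- The (topological) support of a measure: points all of whose neighborhoods have
positive measure. -/
def msupport {D : ℕ} (ν : Measure (Euc D)) : Set (Euc D) :=
  {x | ∀ U ∈ nhds x, 0 < ν U}

lemma lint_comp_affine {D : ℕ} (a : Euc D) {c : ℝ} (hc : c ≠ 0) (f : Euc D → ℝ≥0∞)
    (hf : Measurable f) :
    ∫⁻ y, f (a + c • y) = ENNReal.ofReal |(c ^ D)⁻¹| * ∫⁻ z, f z := by
  have h1 : ∫⁻ y, f (a + c • y) = ∫⁻ w, f (a + w) ∂(Measure.map (c • ·) volume) := by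
    rw [lintegral_map (by fun_prop) (by fun_prop)]
  rw [h1, Measure.map_addHaar_smul volume hc, lintegral_smul_measure,
    lintegral_add_left_eq_self f a, finrank_euclideanSpace_fin, smul_eq_mul]

set_option maxHeartbeats 1000000 in
lemma stepA {D : ℕ} (g : Euc D → ℝ) (hg : Measurable g)
    (ν : Measure (Euc D)) (hν : ν = volume.withDensity (fun x => ENNReal.ofReal (g x)))
    (hprob : IsProbabilityMeasure ν) :
    interp ν = volume.withDensity (fun z => ∫⁻ l in Icc (0:ℝ) 1,
      ENNReal.ofReal (((1 - l) ^ D)⁻¹) *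
        ∫⁻ x, ENNReal.ofReal (g x) * ENNReal.ofReal (g ((1 - l)⁻¹ • (z - l • x)))) := by
  set G : Euc D → ℝ≥0∞ := fun x => ENNReal.ofReal (g x) with hGdef
  have hGm : Measurable G := ENNReal.measurable_ofReal.comp hg
  have hGtop : ∀ x, G x ≠ ⊤ := fun x => ENNReal.ofReal_ne_top
  haveI : SigmaFinite ν := by infer_instance
  have hφ : Measurable (fun p : ℝ × Euc D × Euc D => p.1 • p.2.1 + (1 - p.1) • p.2.2) := by
    fun_prop
  set E : ℝ → ℝ≥0∞ := fun l => ENNReal.ofReal (((1 - l) ^ D)⁻¹) with hEdef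
  have hEtop : ∀ l, E l ≠ ⊤ := fun l => ENNReal.ofReal_ne_top
  have hEm : Measurable E := by
    rw [hEdef]
    exact ENNReal.measurable_ofReal.comp
      (((measurable_const.sub measurable_id).pow_const D).inv)
  set H : ℝ → Euc D → ℝ≥0∞ := fun l z => ∫⁻ x, G x * G ((1 - l)⁻¹ • (z - l • x)) with hHdef
  have hHm : Measurable (Function.uncurry H) := by
    apply Measurable.lintegral_prod_right'
      (f := fun p : (ℝ × Euc D) × Euc D => G p.2 * G ((1 - p.1.1)⁻¹ • (p.1.2 - p.1.1 • p.2)))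
    fun_prop
  refine Measure.ext fun s hs => ?_
  have hind : Measurable (s.indicator (1 : Euc D → ℝ≥0∞)) := measurable_const.indicator hs
  set ind : Euc D → ℝ≥0∞ := s.indicator (1 : Euc D → ℝ≥0∞) with hinddef
  have hindtop : ∀ z, ind z ≠ ⊤ := by
    intro z; rw [hinddef]; unfold Set.indicator; split <;> simp
  have prodsub : ∀ (h : Euc D × Euc D → ℝ≥0∞), Measurable h →
      ∫⁻ q, h q ∂(ν.prod ν) = ∫⁻ x, ∫⁻ y, G x * (G y * h (x, y)) := by
    intro h hh
    have hmeas2 : Measurable fun x => ∫⁻ y, G y * h (x, y) := by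
      apply Measurable.lintegral_prod_right (f := fun x y => G y * h (x, y))
      exact (hGm.comp measurable_snd).mul hh
    have inner : ∀ x, ∫⁻ y, h (x, y) ∂ν = ∫⁻ y, G y * h (x, y) := by
      intro x
      have hm : Measurable fun y => h (x, y) := hh.comp measurable_prodMk_left
      rw [hν, lintegral_withDensity_eq_lintegral_mul volume hGm hm]
      rfl
    calc ∫⁻ q, h q ∂(ν.prod ν) = ∫⁻ x, (∫⁻ y, h (x, y) ∂ν) ∂ν :=
          MeasureTheory.lintegral_prod _ hh.aemeasurable
      _ = ∫⁻ x, (∫⁻ y, G y * h (x, y)) ∂ν := lintegral_congr inner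
      _ = ∫⁻ x, G x * ∫⁻ y, G y * h (x, y) := by
          rw [hν, lintegral_withDensity_eq_lintegral_mul volume hGm hmeas2]; rfl
      _ = ∫⁻ x, ∫⁻ y, G x * (G y * h (x, y)) :=
          lintegral_congr fun x => (lintegral_const_mul' _ _ (hGtop x)).symm
  -- e1
  have e1 : interp ν s = ∫⁻ l in Icc (0:ℝ) 1, ∫⁻ x, ∫⁻ y,
      G x * (G y * ind (l • x + (1 - l) • y)) := by
    rw [interp, Measure.map_apply hφ hs]
    rw [← lintegral_indicator_one (hφ hs)]
    have : ∀ p : ℝ × Euc D × Euc D,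
        (Set.indicator ((fun p : ℝ × Euc D × Euc D => p.1 • p.2.1 + (1 - p.1) • p.2.2) ⁻¹' s)
          (1 : ℝ × Euc D × Euc D → ℝ≥0∞)) p = ind (p.1 • p.2.1 + (1 - p.1) • p.2.2) := by
      intro p
      exact Set.indicator_comp_right (g := (1 : Euc D → ℝ≥0∞))
        (fun p : ℝ × Euc D × Euc D => p.1 • p.2.1 + (1 - p.1) • p.2.2)
    rw [lintegral_congr this]
    have hm3 : Measurable fun p : ℝ × Euc D × Euc D => ind (p.1 • p.2.1 + (1 - p.1) • p.2.2) :=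
      hind.comp hφ
    rw [MeasureTheory.lintegral_prod _ hm3.aemeasurable]
    exact lintegral_congr fun l => prodsub _ (by
      exact hind.comp (by fun_prop))
  have key : ∀ l ∈ Icc (0:ℝ) 1, l ≠ 1 →
      (∫⁻ x, ∫⁻ y, G x * (G y * ind (l • x + (1 - l) • y))) =
      ∫⁻ z, ind z * (E l * H l z) := by
    intro l hl hl1
    have hc : (1 : ℝ) - l ≠ 0 := sub_ne_zero.mpr (Ne.symm hl1)
    have habs : |((1 - l) ^ D)⁻¹| = ((1 - l) ^ D)⁻¹ :=
      abs_of_nonneg (inv_nonneg.mpr (pow_nonneg (sub_nonneg.mpr hl.2) D))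
    have inner : ∀ x : Euc D, (∫⁻ y, G y * ind (l • x + (1 - l) • y)) =
        E l * ∫⁻ z, G ((1 - l)⁻¹ • (z - l • x)) * ind z := by
      intro x
      have hrw : ∀ y : Euc D, G y * ind (l • x + (1 - l) • y) =
          (fun z => G ((1 - l)⁻¹ • (z - l • x)) * ind z) (l • x + (1 - l) • y) := by
        intro y
        have hy : (1 - l)⁻¹ • (l • x + (1 - l) • y - l • x) = y := by
          rw [add_sub_cancel_left, smul_smul, inv_mul_cancel₀ hc, one_smul]
        simp only [hy]
      rw [lintegral_congr hrw,
        lint_comp_affine (l • x) hc (fun z => G ((1 - l)⁻¹ • (z - l • x)) * ind z)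
          ((hGm.comp (by fun_prop)).mul hind),
        habs, hEdef]
    calc (∫⁻ x, ∫⁻ y, G x * (G y * ind (l • x + (1 - l) • y)))
        = ∫⁻ x, G x * (E l * ∫⁻ z, G ((1 - l)⁻¹ • (z - l • x)) * ind z) := by
          refine lintegral_congr fun x => ?_
          rw [lintegral_const_mul' _ _ (hGtop x), inner x]
      _ = ∫⁻ x, E l * ∫⁻ z, (G x * G ((1 - l)⁻¹ • (z - l • x))) * ind z := by
          refine lintegral_congr fun x => ?_
          rw [mul_left_comm, ← lintegral_const_mul' _ _ (hGtop x)]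
          congr 1
          exact lintegral_congr fun z => by ring
      _ = E l * ∫⁻ x, ∫⁻ z, (G x * G ((1 - l)⁻¹ • (z - l • x))) * ind z :=
          lintegral_const_mul' _ _ (hEtop l)
      _ = E l * ∫⁻ z, ∫⁻ x, (G x * G ((1 - l)⁻¹ • (z - l • x))) * ind z := by
          congr 1
          exact lintegral_lintegral_swap (by fun_prop)
      _ = ∫⁻ z, ind z * (E l * H l z) := by
          rw [← lintegral_const_mul' _ _ (hEtop l)]
          refine lintegral_congr fun z => ?_
          rw [lintegral_mul_const' _ _ (hindtop z), hHdef]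
          ring
  have hae : ∀ᵐ l ∂(volume.restrict (Icc (0:ℝ) 1)),
      (∫⁻ x, ∫⁻ y, G x * (G y * ind (l • x + (1 - l) • y))) =
      ∫⁻ z, ind z * (E l * H l z) := by
    have h1 : ∀ᵐ l ∂(volume.restrict (Icc (0:ℝ) 1)), l ∈ Icc (0:ℝ) 1 :=
      ae_restrict_mem measurableSet_Icc
    have h2 : ∀ᵐ (l : ℝ) ∂(volume.restrict (Icc (0:ℝ) 1)), l ≠ 1 := by
      refine ae_restrict_of_ae ?_
      rw [ae_iff]
      convert Real.volume_singleton (a := 1) using 2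
      ext x; simp
    filter_upwards [h1, h2] with l hl hl1 using key l hl hl1
  rw [e1, lintegral_congr_ae hae, withDensity_apply _ hs]
  have hswap : (∫⁻ l in Icc (0:ℝ) 1, ∫⁻ z, ind z * (E l * H l z)) =
      ∫⁻ z, (∫⁻ l in Icc (0:ℝ) 1, ind z * (E l * H l z)) := by
    refine lintegral_lintegral_swap ?_
    have : Measurable (Function.uncurry fun l z => ind z * (E l * H l z)) := by
      apply Measurable.mul
      · exact hind.comp measurable_snd
      · exact (hEm.comp measurable_fst).mul hHm
    exact this.aemeasurable
  rw [hswap]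
  have : ∀ z, (∫⁻ l in Icc (0:ℝ) 1, ind z * (E l * H l z)) =
      Set.indicator s (fun z => ∫⁻ l in Icc (0:ℝ) 1, E l * H l z) z := by
    intro z
    rw [lintegral_const_mul' _ _ (hindtop z)]
    simp only [hinddef, Set.indicator_apply]
    by_cases hz : z ∈ s <;> simp [hz]
  rw [lintegral_congr this, lintegral_indicator hs]

set_option maxHeartbeats 1000000 in
lemma stepB {D : ℕ} (g : Euc D → ℝ) (hg : Measurable g) (hpos : 0 ≤ g)
    (ν : Measure (Euc D)) (hν : ν = volume.withDensity (fun x => ENNReal.ofReal (g x)))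
    (hprob : IsProbabilityMeasure ν) :
    (fun z => ENNReal.ofReal
        (∫ l in Icc (0:ℝ) 1, ((1 - l) ^ D)⁻¹ * ∫ x, g x * g ((1 - l)⁻¹ • (z - l • x))))
      =ᵐ[volume] (fun z => ∫⁻ l in Icc (0:ℝ) 1,
      ENNReal.ofReal (((1 - l) ^ D)⁻¹) *
        ∫⁻ x, ENNReal.ofReal (g x) * ENNReal.ofReal (g ((1 - l)⁻¹ • (z - l • x)))) := by
  set G : Euc D → ℝ≥0∞ := fun x => ENNReal.ofReal (g x) with hGdef
  have hGm : Measurable G := ENNReal.measurable_ofReal.comp hg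
  set E : ℝ → ℝ≥0∞ := fun l => ENNReal.ofReal (((1 - l) ^ D)⁻¹) with hEdef
  have hEm : Measurable E := by
    rw [hEdef]
    exact ENNReal.measurable_ofReal.comp (((measurable_const.sub measurable_id).pow_const D).inv)
  set H : ℝ → Euc D → ℝ≥0∞ := fun l z => ∫⁻ x, G x * G ((1 - l)⁻¹ • (z - l • x)) with hHdef
  have hHm : Measurable (Function.uncurry H) := by
    apply Measurable.lintegral_prod_right'
      (f := fun p : (ℝ × Euc D) × Euc D => G p.2 * G ((1 - p.1.1)⁻¹ • (p.1.2 - p.1.1 • p.2)))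
    fun_prop
  set F : Euc D → ℝ≥0∞ := fun z => ∫⁻ l in Icc (0:ℝ) 1, E l * H l z with hFdef
  have hFm : Measurable F := by
    rw [hFdef]
    apply Measurable.lintegral_prod_right (f := fun z l => E l * H l z)
    exact (hEm.comp measurable_snd).mul (hHm.comp (measurable_snd.prodMk measurable_fst))
  have hφ : Measurable (fun p : ℝ × Euc D × Euc D => p.1 • p.2.1 + (1 - p.1) • p.2.2) := by
    fun_prop
  haveI : SigmaFinite ν := by infer_instance
  have hfin : ∫⁻ z, F z ≠ ⊤ := by
    have h1 : ∫⁻ z, F z = interp ν Set.univ := by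
      rw [stepA g hg ν hν hprob, ← setLIntegral_univ,
        ← withDensity_apply _ MeasurableSet.univ]
    rw [h1, interp, Measure.map_apply hφ MeasurableSet.univ, Set.preimage_univ,
      ← Set.univ_prod_univ, Measure.prod_prod, ← Set.univ_prod_univ, Measure.prod_prod]
    simp [Measure.restrict_apply_univ, Real.volume_Icc]
  have haeF : ∀ᵐ z, F z < ⊤ := ae_lt_top hFm hfin
  filter_upwards [haeF] with z hz
  have hHzm : Measurable fun l => H l z :=
    hHm.comp (measurable_id.prodMk measurable_const)
  have haeH : ∀ᵐ l ∂(volume.restrict (Icc (0:ℝ) 1)), E l * H l z < ⊤ := by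
    exact ae_lt_top (hEm.mul hHzm) hz.ne
  have h1 : ∀ᵐ l ∂(volume.restrict (Icc (0:ℝ) 1)), l ∈ Icc (0:ℝ) 1 :=
    ae_restrict_mem measurableSet_Icc
  have h2 : ∀ᵐ (l : ℝ) ∂(volume.restrict (Icc (0:ℝ) 1)), l ≠ 1 := by
    refine ae_restrict_of_ae ?_
    rw [ae_iff]
    convert Real.volume_singleton (a := 1) using 2
    ext x; simp
  -- inner real integral equals toReal of H
  have hinner : ∀ l : ℝ, (∫ x, g x * g ((1 - l)⁻¹ • (z - l • x))) = (H l z).toReal := by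
    intro l
    rw [integral_eq_lintegral_of_nonneg_ae
        (Filter.Eventually.of_forall fun x => mul_nonneg (hpos x) (hpos _))
        ((hg.mul (hg.comp (by fun_prop))).aestronglyMeasurable)]
    congr 1
    rw [hHdef]
    exact lintegral_congr fun x => ENNReal.ofReal_mul (hpos x)
  have hinner_nonneg : ∀ l : ℝ, 0 ≤ ∫ x, g x * g ((1 - l)⁻¹ • (z - l • x)) := fun l =>
    integral_nonneg fun x => mul_nonneg (hpos x) (hpos _)
  -- outer
  have houter : (∫ l in Icc (0:ℝ) 1, ((1 - l) ^ D)⁻¹ * ∫ x, g x * g ((1 - l)⁻¹ • (z - l • x)))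
      = (∫⁻ l in Icc (0:ℝ) 1,
          ENNReal.ofReal (((1 - l) ^ D)⁻¹ * ∫ x, g x * g ((1 - l)⁻¹ • (z - l • x)))).toReal := by
    apply integral_eq_lintegral_of_nonneg_ae
    · filter_upwards [h1] with l hl
      exact mul_nonneg (inv_nonneg.mpr (pow_nonneg (sub_nonneg.mpr hl.2) D)) (hinner_nonneg l)
    · apply Measurable.aestronglyMeasurable
      apply Measurable.mul
      · exact ((measurable_const.sub measurable_id).pow_const D).inv
      · have : StronglyMeasurable fun p : ℝ × Euc D =>
            g p.2 * g ((1 - p.1)⁻¹ • (z - p.1 • p.2)) :=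
          (Measurable.stronglyMeasurable (by fun_prop))
        exact this.integral_prod_right'.measurable
  have hcongr : (∫⁻ l in Icc (0:ℝ) 1,
      ENNReal.ofReal (((1 - l) ^ D)⁻¹ * ∫ x, g x * g ((1 - l)⁻¹ • (z - l • x)))) = F z := by
    rw [hFdef]
    refine lintegral_congr_ae ?_
    filter_upwards [h1, h2, haeH] with l hl hl1 hH
    have hc : (0:ℝ) < 1 - l := lt_of_le_of_ne (sub_nonneg.mpr hl.2) (fun h => hl1 (by linarith))
    have hE0 : E l ≠ 0 := by
      rw [hEdef]
      simp only [ne_eq, ENNReal.ofReal_eq_zero, not_le]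
      exact inv_pos.mpr (pow_pos hc D)
    have hHfin : H l z ≠ ⊤ := by
      intro h
      rw [h, ENNReal.mul_top hE0] at hH
      exact absurd hH (lt_irrefl _)
    rw [hinner l, ENNReal.ofReal_mul (inv_nonneg.mpr (pow_nonneg hc.le D)),
      ENNReal.ofReal_toReal hHfin]

  rw [houter, hcongr, ENNReal.ofReal_toReal hz.ne]

lemma support_part {D : ℕ} (ν : Measure (Euc D)) [IsProbabilityMeasure ν]
    (hconv : Convex ℝ (msupport ν)) : msupport (interp ν) ⊆ msupport ν := by
  set K := msupport ν with hK
  have hφ : Measurable (fun p : ℝ × Euc D × Euc D => p.1 • p.2.1 + (1 - p.1) • p.2.2) := by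
    fun_prop
  have hopen : IsOpen Kᶜ := by
    rw [isOpen_iff_mem_nhds]
    intro x hx
    rw [Set.mem_compl_iff, hK, msupport, Set.mem_setOf_eq] at hx
    push_neg at hx
    obtain ⟨U, hU, hU0⟩ := hx
    have hU0' : ν U = 0 := le_antisymm hU0 (zero_le)
    have hsub : interior U ⊆ Kᶜ := by
      intro y hy
      rw [Set.mem_compl_iff, hK, msupport, Set.mem_setOf_eq]
      push_neg
      exact ⟨interior U, isOpen_interior.mem_nhds hy,
        le_trans (measure_mono interior_subset) (le_of_eq hU0')⟩
    exact Filter.mem_of_superset (interior_mem_nhds.mpr hU) hsub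
  have hνKc : ν Kᶜ = 0 := by
    refine measure_null_of_locally_null _ fun x hx => ?_
    rw [Set.mem_compl_iff, hK, msupport, Set.mem_setOf_eq] at hx
    push_neg at hx
    obtain ⟨U, hU, hU0⟩ := hx
    exact ⟨U, mem_nhdsWithin_of_mem_nhds hU, le_antisymm hU0 (zero_le)⟩
  have hKm : MeasurableSet Kᶜ := hopen.measurableSet
  have hinterp : interp ν Kᶜ = 0 := by
    rw [interp, Measure.map_apply hφ hKm]
    have hsub : (fun p : ℝ × Euc D × Euc D => p.1 • p.2.1 + (1 - p.1) • p.2.2) ⁻¹' Kᶜ ⊆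
        ((Icc (0:ℝ) 1)ᶜ ×ˢ (Set.univ : Set (Euc D × Euc D))) ∪
        ((Set.univ : Set ℝ) ×ˢ (Kᶜ ×ˢ (Set.univ : Set (Euc D)))) ∪
        ((Set.univ : Set ℝ) ×ˢ ((Set.univ : Set (Euc D)) ×ˢ Kᶜ)) := by
      intro p hp
      by_contra hcon
      simp only [Set.mem_union, Set.mem_prod, Set.mem_univ, true_and, and_true,
        Set.mem_compl_iff, not_or, not_and, not_not] at hcon
      obtain ⟨⟨hpI, hx⟩, hy⟩ := hcon
      have : p.1 • p.2.1 + (1 - p.1) • p.2.2 ∈ K :=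
        hconv hx hy hpI.1 (sub_nonneg.mpr hpI.2) (by ring)
      exact hp this
    refine measure_mono_null hsub ?_
    refine measure_union_null (measure_union_null ?_ ?_) ?_
    · rw [Measure.prod_prod, Measure.restrict_apply measurableSet_Icc.compl]
      simp
    · rw [Measure.prod_prod, Measure.prod_prod, hνKc]
      simp
    · rw [Measure.prod_prod, Measure.prod_prod, hνKc]
      simp
  intro z hz
  by_contra hzK
  have : Kᶜ ∈ nhds z := hopen.mem_nhds hzK
  have := hz Kᶜ this
  rw [hinterp] at this
  exact lt_irrefl _ this

set_option maxHeartbeats 1000000 in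
/-- if `ν = g·Leb` with `g ∈ L¹`, `g ≥ 0` compactly supported, then
`ν^int` is absolutely continuous with density
`g^int(z) = ∫₀¹ (1−λ)^{−D} ∫ g(x) g((z−λx)/(1−λ)) dx dλ`, and if the support of `ν` is
convex then `supp(ν^int) ⊆ supp(ν)`. -/
theorem interp_density_formula
    (D : ℕ) (g : Euc D → ℝ)
    (hint : Integrable g volume) (hpos : 0 ≤ g) (hcpt : HasCompactSupport g)
    (ν : Measure (Euc D))
    (hν : ν = volume.withDensity (fun x => ENNReal.ofReal (g x)))
    (hprob : IsProbabilityMeasure ν) :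
    interp ν = volume.withDensity (fun z => ENNReal.ofReal
      (∫ l in Icc (0:ℝ) 1, ((1 - l) ^ D)⁻¹ * ∫ x, g x * g ((1 - l)⁻¹ • (z - l • x)))) ∧
    (Convex ℝ (msupport ν) → msupport (interp ν) ⊆ msupport ν) := by
  have ham : AEMeasurable g volume := hint.aemeasurable
  set g₀ : Euc D → ℝ := fun x => max (ham.mk g x) 0 with hg₀def
  have hg₀m : Measurable g₀ := ham.measurable_mk.max measurable_const
  have hg₀pos : 0 ≤ g₀ := fun x => le_max_right _ _
  have hae₀ : g =ᵐ[volume] g₀ := by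
    filter_upwards [ham.ae_eq_mk] with x hx
    rw [hg₀def]
    simp only [← hx]
    exact (max_eq_left (hpos x)).symm
  have hν₀ : ν = volume.withDensity (fun x => ENNReal.ofReal (g₀ x)) := by
    rw [hν]
    exact withDensity_congr_ae (hae₀.mono fun x hx => by simp only [hx])
  constructor
  · -- the density identity
    have hfr : ∀ z : Euc D,
        (∫ l in Icc (0:ℝ) 1, ((1 - l) ^ D)⁻¹ * ∫ x, g x * g ((1 - l)⁻¹ • (z - l • x))) =
        ∫ l in Icc (0:ℝ) 1, ((1 - l) ^ D)⁻¹ * ∫ x, g₀ x * g₀ ((1 - l)⁻¹ • (z - l • x)) := by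
      intro z
      refine integral_congr_ae ?_
      have h1 : ∀ᵐ l ∂(volume.restrict (Icc (0:ℝ) 1)), l ≠ 0 ∧ l ≠ 1 := by
        refine ae_restrict_of_ae ?_
        have h0 : (volume : Measure ℝ) ({0} ∪ {1} : Set ℝ) = 0 :=
          measure_union_null Real.volume_singleton Real.volume_singleton
        rw [ae_iff]
        refine measure_mono_null (fun x hx => ?_) h0
        simp only [Set.mem_setOf_eq, not_and_or, not_not] at hx
        rcases hx with h | h <;> simp [h]
      filter_upwards [h1] with l hl
      obtain ⟨hl0, hl1⟩ := hl
      congr 1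
      -- inner integrals agree
      have hc : (1:ℝ) - l ≠ 0 := sub_ne_zero.mpr (Ne.symm hl1)
      have hcoef : -((1 - l)⁻¹ * l) ≠ 0 := by
        simp only [neg_ne_zero, mul_ne_zero_iff]
        exact ⟨inv_ne_zero hc, hl0⟩
      have hqmp : Measure.QuasiMeasurePreserving
          (fun x : Euc D => (1 - l)⁻¹ • (z - l • x)) volume volume := by
        have hT : (fun x : Euc D => (1 - l)⁻¹ • (z - l • x)) =
            (fun w : Euc D => (1 - l)⁻¹ • z + w) ∘ (fun x : Euc D => (-((1 - l)⁻¹ * l)) • x) := by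
          funext x
          simp only [Function.comp_apply, smul_sub, smul_smul, neg_smul, ← sub_eq_add_neg]
        rw [hT]
        exact ((measurePreserving_add_left volume ((1 - l)⁻¹ • z)).quasiMeasurePreserving).comp
          (Measure.quasiMeasurePreserving_smul volume hcoef)
      refine integral_congr_ae ?_
      have h2 := hqmp.ae_eq_comp hae₀
      filter_upwards [hae₀, h2] with x hx hx2
      show g x * g ((1 - l)⁻¹ • (z - l • x)) = g₀ x * g₀ ((1 - l)⁻¹ • (z - l • x))
      rw [hx]
      congr 1
    have hA := stepA g₀ hg₀m ν hν₀ hprob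
    have hB := stepB g₀ hg₀m hg₀pos ν hν₀ hprob
    rw [hA]
    rw [show (fun z => ENNReal.ofReal
        (∫ l in Icc (0:ℝ) 1, ((1 - l) ^ D)⁻¹ * ∫ x, g x * g ((1 - l)⁻¹ • (z - l • x)))) =
      (fun z => ENNReal.ofReal
        (∫ l in Icc (0:ℝ) 1, ((1 - l) ^ D)⁻¹ * ∫ x, g₀ x * g₀ ((1 - l)⁻¹ • (z - l • x))))
      from funext fun z => by rw [hfr z]]
    exact (withDensity_congr_ae hB).symm
  · exact support_part ν
end
end

section
/- Let ν be a Borel probability measure on ℝ^D with finite second moment, with compact support K of diameter d, and suppose the segment defect δ = δ_seg(K) is strictly positive. Choose x₀, y₀ ∈ K and λ₀ ∈ (0,1) with z₀ = λ₀x₀ + (1−λ₀)y₀ satisfying dist(z₀, K) = δ (such a maximizer exists by compactness). Set ρ = δ/8 and η = min{λ₀/2, (1−λ₀)/2, δ/(8(1+d))}. Then ν^int(B_{δ/2}(z₀)) ≥ 2η·ν(B_ρ(x₀))·ν(B_ρ(y₀)) > 0, and consequently W₂²(ν^int, ν) ≥ (δ²/2)·η·ν(B_ρ(x₀))·ν(B_ρ(y₀))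 > 0. In particular ν^int assigns positive mass to the complement of K. -/
open MeasureTheory Metric Set
open scoped ENNReal NNReal

noncomputable section

/-- The segment defect of a set `K`: the supremum over chords of `K` of the distance
from points of the chord to `K`. -/
noncomputable def segDefect {D : ℕ} (K : Set (Euc D)) : ℝ :=
  sSup {d : ℝ | ∃ x ∈ K, ∃ y ∈ K, ∃ l ∈ Icc (0:ℝ) 1,
    d = infDist (l • x + (1 - l) • y) K}

/-- if the support `K` of `ν` has positive segment defect `δ`, with
maximizing chord data `x₀, y₀, l₀` and `z₀ = l₀x₀+(1−l₀)y₀`, then with `ρ = δ/8` and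
`η = min{l₀/2, (1−l₀)/2, δ/(8(1+d))}` one has
`ν^int(B_{δ/2}(z₀)) ≥ 2η·ν(B_ρ(x₀))·ν(B_ρ(y₀)) > 0`, hence
`W₂²(ν^int,ν) ≥ (δ²/2)·η·ν(B_ρ(x₀))·ν(B_ρ(y₀)) > 0`, and `ν^int(Kᶜ) > 0`. -/
theorem interp_escapes_nonconvex_support
    (D : ℕ) (ν : Measure (Euc D)) (hprob : IsProbabilityMeasure ν)
    (hmom : (∫⁻ x, (‖x‖₊ : ℝ≥0∞) ^ 2 ∂ν) < ⊤)
    (K : Set (Euc D)) (hK : K = msupport ν) (hKcpt : IsCompact K)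
    (d δ : ℝ) (hd : d = diam K) (hδdef : δ = segDefect K) (hδpos : 0 < δ)
    (x₀ y₀ : Euc D) (hx₀ : x₀ ∈ K) (hy₀ : y₀ ∈ K)
    (l₀ : ℝ) (hl₀ : l₀ ∈ Ioo (0:ℝ) 1)
    (z₀ : Euc D) (hz₀ : z₀ = l₀ • x₀ + (1 - l₀) • y₀)
    (hmax : infDist z₀ K = δ)
    (ρ η : ℝ) (hρ : ρ = δ / 8)
    (hη : η = min (l₀ / 2) (min ((1 - l₀) / 2) (δ / (8 * (1 + d))))) :
    ENNReal.ofReal (2 * η) * ν (ball x₀ ρ) * ν (ball y₀ ρ)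
        ≤ interp ν (ball z₀ (δ / 2)) ∧
    0 < interp ν (ball z₀ (δ / 2)) ∧
    ENNReal.ofReal (δ ^ 2 / 2 * η) * ν (ball x₀ ρ) * ν (ball y₀ ρ)
        ≤ W2sq (interp ν) ν ∧
    0 < W2sq (interp ν) ν ∧
    0 < interp ν Kᶜ := by
  obtain ⟨hl₀0, hl₀1⟩ := hl₀
  have hd0 : 0 ≤ d := hd ▸ Metric.diam_nonneg
  have hη1 : η ≤ l₀ / 2 := hη ▸ min_le_left _ _
  have hη2 : η ≤ (1 - l₀) / 2 := hη ▸ (min_le_right _ _).trans (min_le_left _ _)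
  have hη3 : η ≤ δ / (8 * (1 + d)) := hη ▸ (min_le_right _ _).trans (min_le_right _ _)
  have hηpos : 0 < η := by
    rw [hη, lt_min_iff, lt_min_iff]
    exact ⟨by linarith, by linarith, div_pos hδpos (by linarith)⟩
  have hηd : η * d ≤ δ / 8 := by
    have h1 : η * d ≤ δ / (8 * (1 + d)) * d := mul_le_mul_of_nonneg_right hη3 hd0
    have h2 : δ / (8 * (1 + d)) * d ≤ δ / 8 := by
      rw [div_mul_eq_mul_div, div_le_div_iff₀ (by linarith) (by norm_num)]
      nlinarith
    linarith
  -- geometric key: points built from the rectangle land in the ball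
  have key : ∀ l ∈ Ioo (l₀ - η) (l₀ + η), ∀ x ∈ ball x₀ ρ, ∀ y ∈ ball y₀ ρ,
      l • x + (1 - l) • y ∈ ball z₀ (δ / 2) := by
    rintro l ⟨hl1, hl2⟩ x hx y hy
    have hxy : ‖x₀ - y₀‖ ≤ d := by
      rw [hd, ← dist_eq_norm]; exact dist_le_diam_of_mem hKcpt.isBounded hx₀ hy₀
    have hxx : ‖x - x₀‖ < ρ := by rw [← dist_eq_norm]; exact hx
    have hyy : ‖y - y₀‖ < ρ := by rw [← dist_eq_norm]; exact hy
    have hρpos : 0 < ρ := by rw [hρ]; linarith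
    have hlpos : 0 < l := by linarith
    have hl1' : l < 1 := by linarith
    rw [mem_ball, dist_eq_norm]
    have e : l • x + (1 - l) • y - z₀
        = l • (x - x₀) + (1 - l) • (y - y₀) + (l - l₀) • (x₀ - y₀) := by
      rw [hz₀]; module
    rw [e]
    have t1 : ‖l • (x - x₀) + (1 - l) • (y - y₀) + (l - l₀) • (x₀ - y₀)‖
        ≤ ‖l • (x - x₀)‖ + ‖(1 - l) • (y - y₀)‖ + ‖(l - l₀) • (x₀ - y₀)‖ :=
      (norm_add_le _ _).trans (by gcongr; exact norm_add_le _ _)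
    have n1 : ‖l • (x - x₀)‖ < ρ := by
      rw [norm_smul, Real.norm_eq_abs, abs_of_pos hlpos]
      calc l * ‖x - x₀‖ ≤ 1 * ‖x - x₀‖ := by
            exact mul_le_mul_of_nonneg_right (le_of_lt hl1') (norm_nonneg _)
        _ < ρ := by rw [one_mul]; exact hxx
    have n2 : ‖(1 - l) • (y - y₀)‖ < ρ := by
      rw [norm_smul, Real.norm_eq_abs, abs_of_pos (by linarith : (0:ℝ) < 1 - l)]
      calc (1 - l) * ‖y - y₀‖ ≤ 1 * ‖y - y₀‖ := by
            exact mul_le_mul_of_nonneg_right (by linarith) (norm_nonneg _)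
        _ < ρ := by rw [one_mul]; exact hyy
    have n3 : ‖(l - l₀) • (x₀ - y₀)‖ ≤ δ / 8 := by
      rw [norm_smul, Real.norm_eq_abs]
      have habs : |l - l₀| ≤ η := abs_le.2 ⟨by linarith, by linarith⟩
      calc |l - l₀| * ‖x₀ - y₀‖ ≤ η * d :=
            mul_le_mul habs hxy (norm_nonneg _) (le_of_lt hηpos)
        _ ≤ δ / 8 := hηd
    have : ρ + ρ + δ / 8 ≤ 3 * δ / 8 := by rw [hρ]; linarith
    linarith
  -- measurability of the interpolation map
  have hf : Measurable (fun p : ℝ × (Euc D × Euc D) => p.1 • p.2.1 + (1 - p.1) • p.2.2) := by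
    fun_prop
  -- positivity of ball masses
  have hx₀' : ∀ U ∈ nhds x₀, 0 < ν U := by rw [hK] at hx₀; exact hx₀
  have hy₀' : ∀ U ∈ nhds y₀, 0 < ν U := by rw [hK] at hy₀; exact hy₀
  have hρpos : 0 < ρ := by rw [hρ]; linarith
  have hνx : 0 < ν (ball x₀ ρ) := hx₀' _ (ball_mem_nhds _ hρpos)
  have hνy : 0 < ν (ball y₀ ρ) := hy₀' _ (ball_mem_nhds _ hρpos)
  -- main lower bound for interp ν on the ball
  have h1 : ENNReal.ofReal (2 * η) * ν (ball x₀ ρ) * ν (ball y₀ ρ)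
      ≤ interp ν (ball z₀ (δ / 2)) := by
    rw [interp, Measure.map_apply hf measurableSet_ball]
    have hsub : (Ioo (l₀ - η) (l₀ + η)) ×ˢ (ball x₀ ρ ×ˢ ball y₀ ρ) ⊆
        (fun p : ℝ × (Euc D × Euc D) => p.1 • p.2.1 + (1 - p.1) • p.2.2) ⁻¹'
          ball z₀ (δ / 2) := by
      rintro ⟨l, x, y⟩ ⟨hl, hx, hy⟩
      exact key l hl x hx y hy
    refine le_trans ?_ (measure_mono hsub)
    rw [Measure.prod_prod, Measure.prod_prod, Measure.restrict_apply measurableSet_Ioo]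
    have hint : Ioo (l₀ - η) (l₀ + η) ∩ Icc (0:ℝ) 1 = Ioo (l₀ - η) (l₀ + η) := by
      refine inter_eq_left.2 fun t ht => ⟨by cases ht; linarith, by cases ht; linarith⟩
    rw [hint, Real.volume_Ioo, show l₀ + η - (l₀ - η) = 2 * η by ring, mul_assoc]
  have h2 : 0 < interp ν (ball z₀ (δ / 2)) := by
    refine lt_of_lt_of_le ?_ h1
    have : 0 < ENNReal.ofReal (2 * η) := ENNReal.ofReal_pos.2 (by linarith)
    exact ENNReal.mul_pos (ENNReal.mul_pos this.ne' hνx.ne').ne' hνy.ne'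
  -- ν vanishes outside K
  have hKc : ν Kᶜ = 0 := by
    apply measure_null_of_locally_null
    intro x hx
    rw [hK] at hx
    simp only [mem_compl_iff, msupport, mem_setOf_eq] at hx
    push_neg at hx
    obtain ⟨U, hU, hU0⟩ := hx
    exact ⟨U, mem_nhdsWithin_of_mem_nhds hU, le_zero_iff.1 hU0⟩
  -- distance bound between the ball and K
  have hball_dist : ∀ u ∈ ball z₀ (δ / 2), ∀ v ∈ K, δ / 2 ≤ dist u v := by
    intro u hu v hv
    have ha : infDist z₀ K ≤ infDist u K + dist z₀ u := infDist_le_infDist_add_dist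
    have hb : infDist u K ≤ dist u v := infDist_le_dist_of_mem hv
    have hc : dist z₀ u < δ / 2 := by rw [dist_comm]; exact mem_ball.1 hu
    rw [hmax] at ha
    linarith
  have hballKc : ball z₀ (δ / 2) ⊆ Kᶜ := by
    intro u hu hK'
    have := hball_dist u hu u hK'
    rw [dist_self] at this
    linarith
  -- Wasserstein lower bound
  have hW : ENNReal.ofReal (δ ^ 2 / 2 * η) * ν (ball x₀ ρ) * ν (ball y₀ ρ)
      ≤ W2sq (interp ν) ν := by
    rw [W2sq]
    refine le_iInf fun π => le_iInf fun hπ1 => le_iInf fun hπ2 => ?_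
    set S : Set (Euc D × Euc D) :=
      (Prod.fst ⁻¹' ball z₀ (δ / 2)) ∩ (Prod.snd ⁻¹' K) with hS
    have hKm : MeasurableSet K := hKcpt.isClosed.measurableSet
    have hSm : MeasurableSet S :=
      (measurableSet_ball.preimage measurable_fst).inter (hKm.preimage measurable_snd)
    have hπball : π (Prod.fst ⁻¹' ball z₀ (δ / 2)) = interp ν (ball z₀ (δ / 2)) := by
      rw [← hπ1, Measure.map_apply measurable_fst measurableSet_ball]
    have hπKc : π (Prod.snd ⁻¹' Kᶜ) = 0 := by
      rw [← hKc, ← hπ2, Measure.map_apply measurable_snd hKm.compl]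
    have hπS : interp ν (ball z₀ (δ / 2)) ≤ π S := by
      rw [← hπball]
      calc π (Prod.fst ⁻¹' ball z₀ (δ / 2)) ≤ π (S ∪ Prod.snd ⁻¹' Kᶜ) := by
            refine measure_mono fun p hp => ?_
            by_cases hpK : p.2 ∈ K
            · exact Or.inl ⟨hp, hpK⟩
            · exact Or.inr hpK
        _ ≤ π S + π (Prod.snd ⁻¹' Kᶜ) := measure_union_le _ _
        _ = π S := by rw [hπKc, add_zero]
    have hpt : ∀ p ∈ S, ENNReal.ofReal ((δ / 2) ^ 2) ≤ (‖p.1 - p.2‖₊ : ℝ≥0∞) ^ 2 := by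
      rintro p ⟨hp1, hp2⟩
      have hdp : δ / 2 ≤ ‖p.1 - p.2‖ := by
        rw [← dist_eq_norm]; exact hball_dist p.1 hp1 p.2 hp2
      have hsq : (δ / 2) ^ 2 ≤ ‖p.1 - p.2‖ ^ 2 := by nlinarith
      calc ENNReal.ofReal ((δ / 2) ^ 2) ≤ ENNReal.ofReal (‖p.1 - p.2‖ ^ 2) :=
            ENNReal.ofReal_le_ofReal hsq
        _ = (‖p.1 - p.2‖₊ : ℝ≥0∞) ^ 2 := by
            rw [ENNReal.ofReal_pow (norm_nonneg _), ofReal_norm]; rfl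
    calc ENNReal.ofReal (δ ^ 2 / 2 * η) * ν (ball x₀ ρ) * ν (ball y₀ ρ)
        = ENNReal.ofReal ((δ / 2) ^ 2) *
            (ENNReal.ofReal (2 * η) * ν (ball x₀ ρ) * ν (ball y₀ ρ)) := by
          rw [show δ ^ 2 / 2 * η = (δ / 2) ^ 2 * (2 * η) by ring,
            ENNReal.ofReal_mul (by positivity)]
          ring
      _ ≤ ENNReal.ofReal ((δ / 2) ^ 2) * π S :=
          mul_le_mul_right (h1.trans hπS) _
      _ = ∫⁻ _ in S, ENNReal.ofReal ((δ / 2) ^ 2) ∂π := (setLIntegral_const _ _).symm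
      _ ≤ ∫⁻ p in S, (‖p.1 - p.2‖₊ : ℝ≥0∞) ^ 2 ∂π := setLIntegral_mono' hSm hpt
      _ ≤ ∫⁻ p, (‖p.1 - p.2‖₊ : ℝ≥0∞) ^ 2 ∂π := setLIntegral_le_lintegral _ _
  refine ⟨h1, h2, hW, ?_, ?_⟩
  · refine lt_of_lt_of_le ?_ hW
    have : 0 < ENNReal.ofReal (δ ^ 2 / 2 * η) := ENNReal.ofReal_pos.2 (by positivity)
    exact ENNReal.mul_pos (ENNReal.mul_pos this.ne' hνx.ne').ne' hνy.ne'
  · exact lt_of_lt_of_le h2 (measure_mono hballKc)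
end
end

section
/- Let ν be a Borel probability measure on ℝ^D with finite second moment, with mean m_ν = ∫ x dν(x), variance σ_ν² = ∫ ‖x−m_ν‖² dν(x), and covariance matrix Cov(ν). Then the interpolation measure ν^int has mean ∫ z dν^int(z) = m_ν, satisfies ∫ ‖z−m_ν‖² dν^int(z) = (2/3)σ_ν², and has covariance matrix Cov(ν^int) = (2/3)·Cov(ν). -/
open MeasureTheory Metric Set
open scoped ENNReal NNReal

noncomputable section

/-- the interpolation measure `ν^int` has the same mean `m_ν` as `ν`,
its variance is `(2/3)·σ_ν²`, and its covariance matrix is `(2/3)·Cov(ν)`. -/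
theorem interp_mean_and_covariance
    (D : ℕ) (ν : Measure (Euc D)) (hprob : IsProbabilityMeasure ν)
    (hmom : (∫⁻ x, (‖x‖₊ : ℝ≥0∞) ^ 2 ∂ν) < ⊤)
    (m : Euc D) (hm : m = ∫ x, x ∂ν) :
    (∫ z, z ∂(interp ν)) = m ∧
    (∫ z, ‖z - m‖ ^ 2 ∂(interp ν)) = (2 / 3) * ∫ x, ‖x - m‖ ^ 2 ∂ν ∧
    (∀ i j : Fin D, (∫ z, (z i - m i) * (z j - m j) ∂(interp ν))
        = (2 / 3) * ∫ x, (x i - m i) * (x j - m j) ∂ν) := by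
  set P : Measure ℝ := volume.restrict (Icc (0:ℝ) 1) with hP
  haveI : IsProbabilityMeasure P := ⟨by simp [hP]⟩
  set μ : Measure (ℝ × (Euc D × Euc D)) := P.prod (ν.prod ν) with hμ
  set F : ℝ × (Euc D × Euc D) → Euc D := fun p => p.1 • p.2.1 + (1 - p.1) • p.2.2 with hF
  have hinterp : interp ν = μ.map F := rfl
  have hFcont : Continuous F := by
    apply Continuous.add
    · exact continuous_fst.smul (continuous_snd.fst)
    · exact (continuous_const.sub continuous_fst).smul (continuous_snd.snd)
  have hFmeas : AEMeasurable F μ := hFcont.measurable.aemeasurable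
  -- integrability basics on ν
  have hid2 : Integrable (fun x : Euc D => ‖x‖ ^ 2) ν := by
    refine ⟨(continuous_norm.pow 2).aestronglyMeasurable, ?_⟩
    simpa [HasFiniteIntegral, ENNReal.coe_pow, enorm_eq_nnnorm] using hmom
  have mem2 : MemLp (fun x : Euc D => x) 2 ν :=
    (memLp_two_iff_integrable_sq_norm aestronglyMeasurable_id).mpr hid2
  have mem2' : MemLp (fun x : Euc D => x - m) 2 ν := mem2.sub (memLp_const m)
  have hsub_int : Integrable (fun x : Euc D => x - m) ν := mem2'.integrable one_le_two
  have hid_int : Integrable (fun x : Euc D => x) ν := mem2.integrable one_le_two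
  have hsq : Integrable (fun x : Euc D => ‖x - m‖ ^ 2) ν :=
    (memLp_two_iff_integrable_sq_norm mem2'.1).mp mem2'
  have habs : ∀ (i : Fin D) (v : Euc D), |v i| ≤ ‖v‖ := by
    intro i v
    rw [EuclideanSpace.norm_eq]
    have h1 : |v i| = Real.sqrt (‖v i‖^2) := by
      rw [Real.sqrt_sq_eq_abs, Real.norm_eq_abs, abs_abs]
    rw [h1]
    exact Real.sqrt_le_sqrt (Finset.single_le_sum (f := fun j => ‖v j‖^2)
      (fun j _ => sq_nonneg _) (Finset.mem_univ i))
  have hbound : ∀ (i j : Fin D) (x : Euc D),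
      |(x i - m i) * (x j - m j)| ≤ ‖x - m‖ ^ 2 := by
    intro i j x
    rw [abs_mul, sq]
    have hi := habs i (x - m); have hj := habs j (x - m)
    simp only [PiLp.sub_apply] at hi hj
    exact mul_le_mul hi hj (abs_nonneg _) (norm_nonneg _)
  have ha_cont : ∀ i : Fin D, Continuous (fun x : Euc D => x i - m i) :=
    fun i => (PiLp.continuous_apply 2 _ i).sub continuous_const
  have hmul_int : ∀ i j : Fin D,
      Integrable (fun x : Euc D => (x i - m i) * (x j - m j)) ν := by
    intro i j
    exact hsq.mono' ((ha_cont i).mul (ha_cont j)).aestronglyMeasurable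
      (ae_of_all _ fun x => by rw [Real.norm_eq_abs]; exact hbound i j x)
  have hcoord_int : ∀ i : Fin D, Integrable (fun x : Euc D => x i) ν := by
    intro i
    exact (EuclideanSpace.proj (𝕜 := ℝ) i).integrable_comp hid_int
  have ha_int : ∀ i : Fin D, Integrable (fun x : Euc D => x i - m i) ν :=
    fun i => (hcoord_int i).sub (integrable_const _)
  have hmean_coord : ∀ i : Fin D, ∫ x, x i ∂ν = m i := by
    intro i
    have h := (EuclideanSpace.proj (𝕜 := ℝ) i).integral_comp_comm hid_int
    rw [← hm] at h
    exact h
  have hcentered : ∀ i : Fin D, ∫ x, (x i - m i) ∂ν = 0 := by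
    intro i
    rw [integral_sub (hcoord_int i) (integrable_const _), integral_const,
      hmean_coord i]
    simp
  -- integrals over P
  have hPl : Integrable (fun l : ℝ => l) P := by
    have : IntegrableOn (fun l : ℝ => l) (Icc 0 1) volume := continuous_id.integrableOn_Icc
    exact this
  have hPl' : Integrable (fun l : ℝ => 1 - l) P := (integrable_const 1).sub hPl
  have hP2 : Integrable (fun l : ℝ => l ^ 2) P := by
    have : IntegrableOn (fun l : ℝ => l ^ 2) (Icc 0 1) volume :=
      (continuous_pow 2).integrableOn_Icc
    exact this
  have hP2' : Integrable (fun l : ℝ => (1 - l) ^ 2) P := by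
    have : IntegrableOn (fun l : ℝ => (1 - l) ^ 2) (Icc 0 1) volume :=
      ((continuous_const.sub continuous_id).pow 2).integrableOn_Icc
    exact this
  have hPll : Integrable (fun l : ℝ => l * (1 - l)) P := by
    have : IntegrableOn (fun l : ℝ => l * (1 - l)) (Icc 0 1) volume :=
      (continuous_id.mul (continuous_const.sub continuous_id)).integrableOn_Icc
    exact this
  have hI1 : ∫ l, l ∂P = 1 / 2 := by
    rw [hP, integral_Icc_eq_integral_Ioc, ← intervalIntegral.integral_of_le zero_le_one,
      integral_id]
    norm_num
  have hI1' : ∫ l, (1 - l) ∂P = 1 / 2 := by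
    rw [hP, integral_Icc_eq_integral_Ioc, ← intervalIntegral.integral_of_le zero_le_one,
      intervalIntegral.integral_comp_sub_left (fun x => x) 1, integral_id]
    norm_num
  have hI2 : ∫ l, l ^ 2 ∂P = 1 / 3 := by
    rw [hP, integral_Icc_eq_integral_Ioc, ← intervalIntegral.integral_of_le zero_le_one,
      integral_pow]
    norm_num
  have hI2' : ∫ l, (1 - l) ^ 2 ∂P = 1 / 3 := by
    rw [hP, integral_Icc_eq_integral_Ioc, ← intervalIntegral.integral_of_le zero_le_one,
      intervalIntegral.integral_comp_sub_left (fun x => x ^ 2) 1, integral_pow]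
    norm_num
  -- coordinate expansion of F
  have hFi : ∀ (i : Fin D) (p : ℝ × (Euc D × Euc D)),
      F p i - m i = p.1 * (p.2.1 i - m i) + (1 - p.1) * (p.2.2 i - m i) := by
    intro i p
    simp only [hF, PiLp.add_apply, PiLp.smul_apply, smul_eq_mul]
    ring
  -- integrability of pieces over ν.prod ν
  have hqxx : ∀ i j : Fin D,
      Integrable (fun q : Euc D × Euc D => (q.1 i - m i) * (q.1 j - m j)) (ν.prod ν) := by
    intro i j
    simpa using (hmul_int i j).mul_prod (integrable_const (1:ℝ))
  have hqyy : ∀ i j : Fin D,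
      Integrable (fun q : Euc D × Euc D => (q.2 i - m i) * (q.2 j - m j)) (ν.prod ν) := by
    intro i j
    simpa using (integrable_const (1:ℝ)).mul_prod (hmul_int i j)
  -- integrals of pieces over ν.prod ν
  have hIxx : ∀ i j : Fin D,
      ∫ q, (q.1 i - m i) * (q.1 j - m j) ∂(ν.prod ν)
        = ∫ x, (x i - m i) * (x j - m j) ∂ν := by
    intro i j
    have := integral_prod_mul (μ := ν) (ν := ν)
      (fun x : Euc D => (x i - m i) * (x j - m j)) (fun _ : Euc D => (1:ℝ))
    simpa using this
  have hIyy : ∀ i j : Fin D,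
      ∫ q, (q.2 i - m i) * (q.2 j - m j) ∂(ν.prod ν)
        = ∫ x, (x i - m i) * (x j - m j) ∂ν := by
    intro i j
    have := integral_prod_mul (μ := ν) (ν := ν)
      (fun _ : Euc D => (1:ℝ)) (fun x : Euc D => (x i - m i) * (x j - m j))
    simpa using this
  have hIxy : ∀ i j : Fin D,
      ∫ q, (q.1 i - m i) * (q.2 j - m j) ∂(ν.prod ν) = 0 := by
    intro i j
    have := integral_prod_mul (μ := ν) (ν := ν)
      (fun x : Euc D => x i - m i) (fun x : Euc D => x j - m j)
    rw [this, hcentered i, hcentered j]; ring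
  -- the four pieces over μ
  have T1 : ∀ i j : Fin D, Integrable (fun p : ℝ × (Euc D × Euc D) =>
      p.1 ^ 2 * ((p.2.1 i - m i) * (p.2.1 j - m j))) μ :=
    fun i j => hP2.mul_prod (hqxx i j)
  have T2 : ∀ i j : Fin D, Integrable (fun p : ℝ × (Euc D × Euc D) =>
      (p.1 * (1 - p.1)) * ((p.2.1 i - m i) * (p.2.2 j - m j))) μ :=
    fun i j => hPll.mul_prod ((ha_int i).mul_prod (ha_int j))
  have T3 : ∀ i j : Fin D, Integrable (fun p : ℝ × (Euc D × Euc D) =>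
      (p.1 * (1 - p.1)) * ((p.2.1 j - m j) * (p.2.2 i - m i))) μ :=
    fun i j => hPll.mul_prod ((ha_int j).mul_prod (ha_int i))
  have T4 : ∀ i j : Fin D, Integrable (fun p : ℝ × (Euc D × Euc D) =>
      (1 - p.1) ^ 2 * ((p.2.2 i - m i) * (p.2.2 j - m j))) μ :=
    fun i j => hP2'.mul_prod (hqyy i j)
  have hGeq : ∀ i j : Fin D, (fun p : ℝ × (Euc D × Euc D) =>
      (F p i - m i) * (F p j - m j)) = fun p =>
        p.1 ^ 2 * ((p.2.1 i - m i) * (p.2.1 j - m j))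
        + (p.1 * (1 - p.1)) * ((p.2.1 i - m i) * (p.2.2 j - m j))
        + (p.1 * (1 - p.1)) * ((p.2.1 j - m j) * (p.2.2 i - m i))
        + (1 - p.1) ^ 2 * ((p.2.2 i - m i) * (p.2.2 j - m j)) := by
    intro i j
    funext p
    rw [hFi i p, hFi j p]
    ring
  have hGint : ∀ i j : Fin D, Integrable (fun p : ℝ × (Euc D × Euc D) =>
      (F p i - m i) * (F p j - m j)) μ := by
    intro i j
    rw [hGeq i j]
    exact (((T1 i j).add (T2 i j)).add (T3 i j)).add (T4 i j)
  have hGval : ∀ i j : Fin D, ∫ p, (F p i - m i) * (F p j - m j) ∂μ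
      = 2 / 3 * ∫ x, (x i - m i) * (x j - m j) ∂ν := by
    intro i j
    rw [hGeq i j]
    have h12 : Integrable (fun p : ℝ × (Euc D × Euc D) =>
        p.1 ^ 2 * ((p.2.1 i - m i) * (p.2.1 j - m j))
        + (p.1 * (1 - p.1)) * ((p.2.1 i - m i) * (p.2.2 j - m j))) μ :=
      (T1 i j).add (T2 i j)
    have h123 : Integrable (fun p : ℝ × (Euc D × Euc D) =>
        p.1 ^ 2 * ((p.2.1 i - m i) * (p.2.1 j - m j))
        + (p.1 * (1 - p.1)) * ((p.2.1 i - m i) * (p.2.2 j - m j))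
        + (p.1 * (1 - p.1)) * ((p.2.1 j - m j) * (p.2.2 i - m i))) μ :=
      h12.add (T3 i j)
    rw [integral_add h123 (T4 i j), integral_add h12 (T3 i j),
      integral_add (T1 i j) (T2 i j)]
    rw [hμ]
    rw [integral_prod_mul (fun l : ℝ => l ^ 2)
      (fun q : Euc D × Euc D => (q.1 i - m i) * (q.1 j - m j))]
    rw [integral_prod_mul (fun l : ℝ => l * (1 - l))
      (fun q : Euc D × Euc D => (q.1 i - m i) * (q.2 j - m j))]
    rw [integral_prod_mul (fun l : ℝ => l * (1 - l))
      (fun q : Euc D × Euc D => (q.1 j - m j) * (q.2 i - m i))]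
    rw [integral_prod_mul (fun l : ℝ => (1 - l) ^ 2)
      (fun q : Euc D × Euc D => (q.2 i - m i) * (q.2 j - m j))]
    rw [hI2, hI2', hIxx i j, hIyy i j, hIxy i j, hIxy j i]
    ring
  -- part 3
  have part3 : ∀ i j : Fin D, (∫ z, (z i - m i) * (z j - m j) ∂(interp ν))
      = (2 / 3) * ∫ x, (x i - m i) * (x j - m j) ∂ν := by
    intro i j
    rw [hinterp, integral_map (f := fun z : Euc D => (z i - m i) * (z j - m j)) hFmeas
      (((ha_cont i).mul (ha_cont j)).aestronglyMeasurable)]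
    exact hGval i j
  -- part 1 : mean
  have hqfst : Integrable (fun q : Euc D × Euc D => q.1) (ν.prod ν) := by
    have h2 : Integrable (fun q : Euc D × Euc D => q.2) (ν.prod ν) := by
      simpa using (integrable_const (1:ℝ)).smul_prod hid_int
    have := h2.swap
    exact this
  have hqsnd : Integrable (fun q : Euc D × Euc D => q.2) (ν.prod ν) := by
    simpa using (integrable_const (1:ℝ)).smul_prod hid_int
  have hIfst : ∫ q, q.1 ∂(ν.prod ν) = m := by
    have := integral_fun_fst (μ := ν) (ν := ν) (fun x : Euc D => x)
    simpa [← hm] using this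
  have hIsnd : ∫ q, q.2 ∂(ν.prod ν) = m := by
    have := integral_fun_snd (μ := ν) (ν := ν) (fun x : Euc D => x)
    simpa [← hm] using this
  have part1 : (∫ z, z ∂(interp ν)) = m := by
    rw [hinterp, integral_map (f := fun z : Euc D => z) hFmeas (by exact aestronglyMeasurable_id)]
    show ∫ p, F p ∂μ = m
    have h1 : Integrable (fun p : ℝ × (Euc D × Euc D) => p.1 • p.2.1) μ :=
      hPl.smul_prod hqfst
    have h2 : Integrable (fun p : ℝ × (Euc D × Euc D) => (1 - p.1) • p.2.2) μ :=
      hPl'.smul_prod hqsnd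
    rw [show (fun p => F p) = fun p : ℝ × (Euc D × Euc D) =>
      (p.1 • p.2.1 + (1 - p.1) • p.2.2) from rfl]
    rw [integral_add h1 h2, hμ]
    rw [integral_prod_smul (fun l : ℝ => l) (fun q : Euc D × Euc D => q.1)]
    rw [integral_prod_smul (fun l : ℝ => 1 - l) (fun q : Euc D × Euc D => q.2)]
    rw [hI1, hI1', hIfst, hIsnd, ← add_smul]
    norm_num
  -- part 2 : variance
  have hpt : ∀ z : Euc D, ‖z - m‖ ^ 2 = ∑ i, (z i - m i) * (z i - m i) := by
    intro z
    rw [EuclideanSpace.norm_eq, Real.sq_sqrt (by positivity)]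
    refine Finset.sum_congr rfl fun i _ => ?_
    simp only [PiLp.sub_apply, Real.norm_eq_abs, sq]
    exact abs_mul_abs_self _
  have hint_coord : ∀ i : Fin D,
      Integrable (fun z : Euc D => (z i - m i) * (z i - m i)) (interp ν) := by
    intro i
    rw [hinterp]
    exact (integrable_map_measure
      (((ha_cont i).mul (ha_cont i)).aestronglyMeasurable) hFmeas).mpr (hGint i i)
  have part2 : (∫ z, ‖z - m‖ ^ 2 ∂(interp ν)) = (2 / 3) * ∫ x, ‖x - m‖ ^ 2 ∂ν := by
    calc ∫ z, ‖z - m‖ ^ 2 ∂(interp ν)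
        = ∫ z, ∑ i, (z i - m i) * (z i - m i) ∂(interp ν) := by
          simp_rw [hpt]
      _ = ∑ i, ∫ z, (z i - m i) * (z i - m i) ∂(interp ν) :=
          integral_finset_sum _ (fun i _ => hint_coord i)
      _ = ∑ i, (2 / 3) * ∫ x, (x i - m i) * (x i - m i) ∂ν := by
          refine Finset.sum_congr rfl fun i _ => part3 i i
      _ = (2 / 3) * ∑ i, ∫ x, (x i - m i) * (x i - m i) ∂ν := by
          rw [Finset.mul_sum]
      _ = (2 / 3) * ∫ x, ∑ i, (x i - m i) * (x i - m i) ∂ν := by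
          rw [integral_finset_sum _ (fun i _ => hmul_int i i)]
      _ = (2 / 3) * ∫ x, ‖x - m‖ ^ 2 ∂ν := by
          simp_rw [hpt]
  exact ⟨part1, part2, part3⟩
end
end

section
/- Let ν be a Borel probability measure on ℝ^D with finite second moment, with mean m_ν and variance σ_ν² = ∫ ‖x−m_ν‖² dν(x). Then (1 − √(2/3))²·σ_ν² ≤ W₂²(ν^int, ν) ≤ (2/3)·σ_ν². If moreover ν has compact support of diameter d, then additionally (2/3)·σ_ν² ≤ d²/3, so W₂²(ν^int, ν) ≤ d²/3. -/
open MeasureTheory Metric Set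
open scoped ENNReal NNReal RealInnerProductSpace

noncomputable section

set_option linter.unusedSectionVars false
set_option linter.unusedVariables false

instance : IsProbabilityMeasure (volume.restrict (Icc (0:ℝ) 1)) :=
  ⟨by simp [Real.volume_Icc]⟩

lemma int01a : ∫ l in Icc (0:ℝ) 1, (l ^ 2 + (1 - l) ^ 2) = 2 / 3 := by
  rw [MeasureTheory.integral_Icc_eq_integral_Ioc,
    ← intervalIntegral.integral_of_le (by norm_num : (0:ℝ) ≤ 1)]
  have h : ∀ l ∈ Set.uIcc (0:ℝ) 1,
      HasDerivAt (fun l : ℝ => 2/3*l^3 - l^2 + l) (l^2 + (1-l)^2) l := by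
    intro l _
    have := (((hasDerivAt_pow 3 l).const_mul (2/3:ℝ)).sub (hasDerivAt_pow 2 l)).add
      (hasDerivAt_id l)
    exact this.congr_deriv (by push_cast; ring)
  rw [intervalIntegral.integral_eq_sub_of_hasDerivAt h
    (Continuous.intervalIntegrable (by continuity) _ _)]
  norm_num

lemma int01b : ∫ l in Icc (0:ℝ) 1, (1 - l) ^ 2 = 1 / 3 := by
  rw [MeasureTheory.integral_Icc_eq_integral_Ioc,
    ← intervalIntegral.integral_of_le (by norm_num : (0:ℝ) ≤ 1)]
  have h : ∀ l ∈ Set.uIcc (0:ℝ) 1,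
      HasDerivAt (fun l : ℝ => 1/3*l^3 - l^2 + l) ((1-l)^2) l := by
    intro l _
    have := (((hasDerivAt_pow 3 l).const_mul (1/3:ℝ)).sub (hasDerivAt_pow 2 l)).add
      (hasDerivAt_id l)
    exact this.congr_deriv (by push_cast; ring)
  rw [intervalIntegral.integral_eq_sub_of_hasDerivAt h
    (Continuous.intervalIntegrable (by continuity) _ _)]
  norm_num

lemma hT_meas {D : ℕ} :
    Measurable (fun p : ℝ × (Euc D × Euc D) => p.1 • p.2.1 + (1 - p.1) • p.2.2) :=
  (measurable_fst.smul (measurable_fst.comp measurable_snd)).add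
    ((measurable_const.sub measurable_fst).smul (measurable_snd.comp measurable_snd))

variable {D : ℕ} {ν : Measure (Euc D)} [IsProbabilityMeasure ν] {m : Euc D} {σ2 : ℝ}


lemma memLp_id (hmom : (∫⁻ x, (‖x‖₊ : ℝ≥0∞) ^ 2 ∂ν) < ⊤) : MemLp (fun x : Euc D => x) 2 ν := by
  refine ⟨aestronglyMeasurable_id, ?_⟩
  rw [eLpNorm_eq_lintegral_rpow_enorm_toReal (by norm_num) (by norm_num)]
  refine ENNReal.rpow_lt_top_of_nonneg (by norm_num) ?_
  have : ∀ x : Euc D, (‖x‖₊ : ℝ≥0∞) ^ ((2:ℝ≥0∞).toReal) = (‖x‖₊ : ℝ≥0∞) ^ (2:ℕ) := by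
    intro x
    rw [ENNReal.toReal_ofNat, ← ENNReal.rpow_natCast]
    norm_num
  simp only [enorm_eq_nnnorm, this]
  exact hmom.ne

section
variable (hmom : (∫⁻ x, (‖x‖₊ : ℝ≥0∞) ^ 2 ∂ν) < ⊤) (hm : m = ∫ x, x ∂ν)
  (hσ2 : σ2 = ∫ x, ‖x - m‖ ^ 2 ∂ν)
include hmom

lemma memLp_sub_m : MemLp (fun x : Euc D => x - m) 2 ν :=
  (memLp_id hmom).sub (memLp_const m)

lemma int_sub_m : Integrable (fun x : Euc D => x - m) ν :=
  (memLp_sub_m hmom).integrable one_le_two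

lemma int_sq : Integrable (fun x : Euc D => ‖x - m‖ ^ 2) ν :=
  (memLp_two_iff_integrable_sq_norm (memLp_sub_m hmom).1).mp (memLp_sub_m hmom)

include hm in
lemma mean_zero : ∫ x, (x - m) ∂ν = 0 := by
  rw [integral_sub ((memLp_id hmom).integrable one_le_two) (integrable_const m),
    integral_const, probReal_univ, one_smul, hm, sub_self]

include hm in
lemma cross_zero (c : Euc D) : ∫ y, ⟪c, y - m⟫ ∂ν = 0 := by
  rw [integral_inner (int_sub_m hmom) c, mean_zero hmom hm, inner_zero_right]

include hm hσ2 in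
lemma key_integral (u : Euc D) (b : ℝ) :
    ∫ y, ‖u + b • (y - m)‖ ^ 2 ∂ν = ‖u‖ ^ 2 + b ^ 2 * σ2 := by
  have h1 : ∀ y : Euc D, ‖u + b • (y - m)‖ ^ 2
      = ‖u‖ ^ 2 + (2 * b) * ⟪u, y - m⟫ + b ^ 2 * ‖y - m‖ ^ 2 := by
    intro y
    rw [norm_add_sq_real, real_inner_smul_right, norm_smul]
    ring_nf
    rw [Real.norm_eq_abs, sq_abs]
  have IA : Integrable (fun y : Euc D => (2 * b) * ⟪u, y - m⟫) ν :=
    ((int_sub_m hmom).const_inner u).const_mul (2 * b)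
  have IB : Integrable (fun y : Euc D => b ^ 2 * ‖y - m‖ ^ 2) ν :=
    (int_sq hmom).const_mul (b ^ 2)
  simp only [h1]
  calc ∫ y, (‖u‖ ^ 2 + (2 * b) * ⟪u, y - m⟫ + b ^ 2 * ‖y - m‖ ^ 2) ∂ν
      = (∫ y, (‖u‖ ^ 2 + (2 * b) * ⟪u, y - m⟫) ∂ν) + ∫ y, b ^ 2 * ‖y - m‖ ^ 2 ∂ν :=
        integral_add ((integrable_const _).add IA) IB
    _ = ((∫ _, ‖u‖ ^ 2 ∂ν) + ∫ y, (2 * b) * ⟪u, y - m⟫ ∂ν) + ∫ y, b ^ 2 * ‖y - m‖ ^ 2 ∂ν := by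
        rw [integral_add (integrable_const _) IA]
    _ = ‖u‖ ^ 2 + b ^ 2 * σ2 := by
        rw [integral_const, probReal_univ, one_smul,
          integral_const_mul, cross_zero hmom hm, integral_const_mul, mul_zero, add_zero, hσ2]

omit hmom in
include hσ2 in
lemma sigma2_nonneg : 0 ≤ σ2 := hσ2 ▸ integral_nonneg fun x => sq_nonneg _

omit hmom in
lemma ofReal_sq_norm (v : Euc D) : (‖v‖₊ : ℝ≥0∞) ^ 2 = ENNReal.ofReal (‖v‖ ^ 2) := by
  rw [ENNReal.ofReal_pow (norm_nonneg v), ofReal_norm, enorm_eq_nnnorm]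

include hm hσ2 in
lemma key_lintegral (u : Euc D) (b : ℝ) :
    ∫⁻ y, (‖u + b • (y - m)‖₊ : ℝ≥0∞) ^ 2 ∂ν = ENNReal.ofReal (‖u‖ ^ 2 + b ^ 2 * σ2) := by
  have hMem : MemLp (fun y : Euc D => u + b • (y - m)) 2 ν :=
    (memLp_const u).add ((memLp_sub_m hmom).const_smul b)
  have hInt : Integrable (fun y : Euc D => ‖u + b • (y - m)‖ ^ 2) ν :=
    (memLp_two_iff_integrable_sq_norm hMem.1).mp hMem
  calc ∫⁻ y, (‖u + b • (y - m)‖₊ : ℝ≥0∞) ^ 2 ∂ν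
      = ∫⁻ y, ENNReal.ofReal (‖u + b • (y - m)‖ ^ 2) ∂ν := by simp only [ofReal_sq_norm]
    _ = ENNReal.ofReal (∫ y, ‖u + b • (y - m)‖ ^ 2 ∂ν) :=
        (ofReal_integral_eq_lintegral_ofReal hInt
          (Filter.Eventually.of_forall fun y => sq_nonneg _)).symm
    _ = _ := by rw [key_integral hmom hm hσ2]

include hm hσ2 in
lemma prod_lintegral :
    ∫⁻ p : Euc D × Euc D, (‖p.1 - p.2‖₊ : ℝ≥0∞) ^ 2 ∂(ν.prod ν) = ENNReal.ofReal (σ2 + σ2) := by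
  rw [lintegral_prod (fun p : Euc D × Euc D => (‖p.1 - p.2‖₊ : ℝ≥0∞) ^ 2) ((measurable_fst.sub measurable_snd).nnnorm.coe_nnreal_ennreal.pow_const
    2).aemeasurable]
  have inner1 : ∀ x : Euc D, ∫⁻ y, (‖x - y‖₊ : ℝ≥0∞) ^ 2 ∂ν
      = ENNReal.ofReal (‖x - m‖ ^ 2 + σ2) := by
    intro x
    have e : (fun y : Euc D => (‖x - y‖₊ : ℝ≥0∞) ^ 2)
        = fun y : Euc D => (‖(x - m) + (-1 : ℝ) • (y - m)‖₊ : ℝ≥0∞) ^ 2 := by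
      funext y
      rw [show x - y = (x - m) + (-1 : ℝ) • (y - m) from by module]
    rw [e, key_lintegral hmom hm hσ2]
    norm_num
  simp only [inner1]
  have hI : Integrable (fun x : Euc D => ‖x - m‖ ^ 2 + σ2) ν :=
    (int_sq hmom).add (integrable_const σ2)
  rw [← ofReal_integral_eq_lintegral_ofReal hI
    (Filter.Eventually.of_forall fun x =>
      add_nonneg (sq_nonneg _) (sigma2_nonneg hσ2))]
  congr 1
  rw [integral_add (int_sq hmom) (integrable_const σ2), ← hσ2, integral_const, probReal_univ,
    one_smul]


include hm hσ2 in
lemma mid_lintegral (l : ℝ) :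
    ∫⁻ q : Euc D × Euc D, (‖l • q.1 + (1 - l) • q.2 - m‖₊ : ℝ≥0∞) ^ 2 ∂(ν.prod ν)
      = ENNReal.ofReal (l ^ 2 * σ2 + (1 - l) ^ 2 * σ2) := by
  rw [lintegral_prod (fun q : Euc D × Euc D => (‖l • q.1 + (1 - l) • q.2 - m‖₊ : ℝ≥0∞) ^ 2) (Measurable.aemeasurable (by fun_prop))]
  have inner1 : ∀ x : Euc D, ∫⁻ y, (‖l • x + (1 - l) • y - m‖₊ : ℝ≥0∞) ^ 2 ∂ν
      = ENNReal.ofReal (l ^ 2 * ‖x - m‖ ^ 2 + (1 - l) ^ 2 * σ2) := by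
    intro x
    have e : (fun y : Euc D => (‖l • x + (1 - l) • y - m‖₊ : ℝ≥0∞) ^ 2)
        = fun y : Euc D => (‖(l • (x - m)) + (1 - l) • (y - m)‖₊ : ℝ≥0∞) ^ 2 := by
      funext y
      rw [show l • x + (1 - l) • y - m = (l • (x - m)) + (1 - l) • (y - m) from by module]
    rw [e, key_lintegral hmom hm hσ2]
    congr 2
    rw [norm_smul, mul_pow, Real.norm_eq_abs, sq_abs]
  simp only [inner1]
  have hI : Integrable (fun x : Euc D => l ^ 2 * ‖x - m‖ ^ 2 + (1 - l) ^ 2 * σ2) ν :=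
    ((int_sq hmom).const_mul (l ^ 2)).add (integrable_const _)
  rw [← ofReal_integral_eq_lintegral_ofReal hI
    (Filter.Eventually.of_forall fun x => add_nonneg
      (mul_nonneg (sq_nonneg _) (sq_nonneg _))
      (mul_nonneg (sq_nonneg _) (sigma2_nonneg hσ2)))]
  congr 1
  rw [integral_add ((int_sq hmom).const_mul (l ^ 2)) (integrable_const _),
    integral_const_mul, ← hσ2, integral_const, probReal_univ, one_smul]

include hm hσ2 in
lemma interp_lintegral :
    ∫⁻ x, (‖x - m‖₊ : ℝ≥0∞) ^ 2 ∂(interp ν) = ENNReal.ofReal (2 / 3 * σ2) := by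
  rw [interp, lintegral_map (show Measurable (fun x : Euc D => (‖x - m‖₊ : ℝ≥0∞) ^ 2) from
      (measurable_id'.sub measurable_const).nnnorm.coe_nnreal_ennreal.pow_const 2) hT_meas,
    lintegral_prod _ (show Measurable (fun a : ℝ × (Euc D × Euc D) =>
      (‖a.1 • a.2.1 + (1 - a.1) • a.2.2 - m‖₊ : ℝ≥0∞) ^ 2) from
      (hT_meas.sub measurable_const).nnnorm.coe_nnreal_ennreal.pow_const 2).aemeasurable]
  simp only [mid_lintegral hmom hm hσ2]
  have hc : Continuous (fun l : ℝ => l ^ 2 * σ2 + (1 - l) ^ 2 * σ2) := by continuity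
  have hI : Integrable (fun l : ℝ => l ^ 2 * σ2 + (1 - l) ^ 2 * σ2)
      (volume.restrict (Icc (0:ℝ) 1)) := hc.integrableOn_Icc
  rw [← ofReal_integral_eq_lintegral_ofReal hI
    (Filter.Eventually.of_forall fun l => add_nonneg
      (mul_nonneg (sq_nonneg _) (sigma2_nonneg hσ2))
      (mul_nonneg (sq_nonneg _) (sigma2_nonneg hσ2)))]
  congr 1
  have e : ∀ l : ℝ, l ^ 2 * σ2 + (1 - l) ^ 2 * σ2 = (l ^ 2 + (1 - l) ^ 2) * σ2 := fun l => by ring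
  simp only [e]
  rw [MeasureTheory.integral_mul_const, int01a]


include hm hσ2 in
lemma cost_lintegral :
    ∫⁻ p : ℝ × (Euc D × Euc D),
        (‖(p.1 • p.2.1 + (1 - p.1) • p.2.2) - p.2.1‖₊ : ℝ≥0∞) ^ 2
        ∂((volume.restrict (Icc (0:ℝ) 1)).prod (ν.prod ν))
      = ENNReal.ofReal (2 / 3 * σ2) := by
  rw [lintegral_prod _ (show Measurable (fun p : ℝ × (Euc D × Euc D) =>
      (‖(p.1 • p.2.1 + (1 - p.1) • p.2.2) - p.2.1‖₊ : ℝ≥0∞) ^ 2) from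
      (hT_meas.sub (measurable_fst.comp measurable_snd)).nnnorm.coe_nnreal_ennreal.pow_const
        2).aemeasurable]
  have inner1 : ∀ l : ℝ, ∫⁻ q : Euc D × Euc D,
      (‖(l • q.1 + (1 - l) • q.2) - q.1‖₊ : ℝ≥0∞) ^ 2 ∂(ν.prod ν)
      = ENNReal.ofReal ((1 - l) ^ 2 * (σ2 + σ2)) := by
    intro l
    have e : (fun q : Euc D × Euc D => (‖(l • q.1 + (1 - l) • q.2) - q.1‖₊ : ℝ≥0∞) ^ 2)
        = fun q : Euc D × Euc D =>
          ENNReal.ofReal ((1 - l) ^ 2) * (‖q.1 - q.2‖₊ : ℝ≥0∞) ^ 2 := by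
      funext q
      rw [show (l • q.1 + (1 - l) • q.2) - q.1 = (1 - l) • (q.2 - q.1) from by module,
        ofReal_sq_norm, ofReal_sq_norm, norm_smul, mul_pow, Real.norm_eq_abs, sq_abs,
        norm_sub_rev, ENNReal.ofReal_mul (sq_nonneg _)]
    rw [e, lintegral_const_mul _ (f := fun q : Euc D × Euc D => (‖q.1 - q.2‖₊ : ℝ≥0∞) ^ 2) ((measurable_fst.sub
        measurable_snd).nnnorm.coe_nnreal_ennreal.pow_const 2),
      prod_lintegral hmom hm hσ2, ← ENNReal.ofReal_mul (sq_nonneg _)]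
  simp only [inner1]
  have hc : Continuous (fun l : ℝ => (1 - l) ^ 2 * (σ2 + σ2)) := by continuity
  have hI : Integrable (fun l : ℝ => (1 - l) ^ 2 * (σ2 + σ2))
      (volume.restrict (Icc (0:ℝ) 1)) := hc.integrableOn_Icc
  rw [← ofReal_integral_eq_lintegral_ofReal hI
    (Filter.Eventually.of_forall fun l => mul_nonneg (sq_nonneg _)
      (add_nonneg (sigma2_nonneg hσ2) (sigma2_nonneg hσ2)))]
  rw [MeasureTheory.integral_mul_const, int01b]
  congr 1
  ring


include hm hσ2 in
lemma var_lintegral' : ∫⁻ y, (‖y - m‖₊ : ℝ≥0∞) ^ 2 ∂ν = ENNReal.ofReal σ2 := by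
  have := key_lintegral hmom hm hσ2 0 1
  simpa using this

end

omit [IsProbabilityMeasure ν] in
lemma msupport_compl_null : ν (msupport ν)ᶜ = 0 := by
  obtain ⟨T, hTc, hTsub, hTeq⟩ := TopologicalSpace.isOpen_sUnion_countable
    {U : Set (Euc D) | IsOpen U ∧ ν U = 0} (fun s hs => hs.1)
  have hν : ν (⋃₀ {U : Set (Euc D) | IsOpen U ∧ ν U = 0}) = 0 := by
    rw [← hTeq]
    exact (measure_sUnion_null_iff hTc).mpr fun U hU => (hTsub hU).2
  refine measure_mono_null ?_ hν
  intro x hx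
  simp only [msupport, mem_compl_iff, mem_setOf_eq, not_forall] at hx
  obtain ⟨U, hU, hU0⟩ := hx
  have hU0' : ν U = 0 := by
    by_contra h
    exact hU0 (pos_iff_ne_zero.mpr h)
  obtain ⟨V, hVU, hVopen, hxV⟩  := _root_.mem_nhds_iff.mp hU
  exact ⟨V, ⟨hVopen, measure_mono_null hVU hU0'⟩, hxV⟩

/-- two-sided variance bounds for the Wasserstein distance between `ν` and
its interpolation measure: `(1−√(2/3))²·σ_ν² ≤ W₂²(ν^int,ν) ≤ (2/3)·σ_ν²`; and if `ν`
has compact support of diameter `d`, then moreover `(2/3)·σ_ν² ≤ d²/3`, so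
`W₂²(ν^int,ν) ≤ d²/3`. -/
theorem interp_W2_variance_bounds
    (D : ℕ) (ν : Measure (Euc D)) (hprob : IsProbabilityMeasure ν)
    (hmom : (∫⁻ x, (‖x‖₊ : ℝ≥0∞) ^ 2 ∂ν) < ⊤)
    (m : Euc D) (hm : m = ∫ x, x ∂ν)
    (σ2 : ℝ) (hσ2 : σ2 = ∫ x, ‖x - m‖ ^ 2 ∂ν) :
    ENNReal.ofReal ((1 - Real.sqrt (2 / 3)) ^ 2 * σ2) ≤ W2sq (interp ν) ν ∧
    W2sq (interp ν) ν ≤ ENNReal.ofReal (2 / 3 * σ2) ∧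
    (IsCompact (msupport ν) →
      2 / 3 * σ2 ≤ diam (msupport ν) ^ 2 / 3 ∧
      W2sq (interp ν) ν ≤ ENNReal.ofReal (diam (msupport ν) ^ 2 / 3)) := by
  haveI := hprob
  have hσnn : 0 ≤ σ2 := sigma2_nonneg hσ2
  -- the explicit coupling for the upper bound
  set P := (volume.restrict (Icc (0:ℝ) 1)).prod (ν.prod ν) with hP
  set g : ℝ × (Euc D × Euc D) → Euc D × Euc D :=
    fun p => (p.1 • p.2.1 + (1 - p.1) • p.2.2, p.2.1) with hgdef
  have hg : Measurable g := hT_meas.prodMk (measurable_fst.comp measurable_snd)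
  have h1 : (P.map g).map Prod.fst = interp ν := by
    rw [Measure.map_map measurable_fst hg]
    rfl
  have h2 : (P.map g).map Prod.snd = ν := by
    rw [Measure.map_map measurable_snd hg]
    have : (Prod.snd ∘ g) = (Prod.fst ∘ Prod.snd :
        ℝ × (Euc D × Euc D) → Euc D)  := rfl
    rw [this, hP, ← Measure.map_map measurable_fst measurable_snd]
    simp [Measure.map_snd_prod, Measure.map_fst_prod]
  have hub : W2sq (interp ν) ν ≤ ENNReal.ofReal (2 / 3 * σ2) := by
    have hcost : ∫⁻ p, (‖p.1 - p.2‖₊ : ℝ≥0∞) ^ 2 ∂(P.map g)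
        = ENNReal.ofReal (2 / 3 * σ2) := by
      rw [lintegral_map (f := fun p : Euc D × Euc D => (‖p.1 - p.2‖₊ : ℝ≥0∞) ^ 2) ((measurable_fst.sub
        measurable_snd).nnnorm.coe_nnreal_ennreal.pow_const 2) hg]
      exact cost_lintegral hmom hm hσ2
    calc W2sq (interp ν) ν ≤ ∫⁻ p, (‖p.1 - p.2‖₊ : ℝ≥0∞) ^ 2 ∂(P.map g) :=
          iInf_le_of_le (P.map g) (iInf_le_of_le h1 (iInf_le_of_le h2 le_rfl))
      _ = ENNReal.ofReal (2 / 3 * σ2) := hcost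
  refine ⟨?_, hub, ?_⟩
  · -- lower bound
    refine le_iInf fun π => le_iInf fun hπ1 => le_iInf fun hπ2 => ?_
    set C := ∫⁻ p : Euc D × Euc D, (‖p.1 - p.2‖₊ : ℝ≥0∞) ^ 2 ∂π with hC
    have conv : ∀ x : ℝ≥0∞, x ^ (2:ℝ) = x ^ (2:ℕ) := fun x => by
      rw [← ENNReal.rpow_natCast]; norm_num
    have hA : ∫⁻ p : Euc D × Euc D, (‖p.2 - m‖₊ : ℝ≥0∞) ^ 2 ∂π = ENNReal.ofReal σ2 := by
      have := lintegral_map (μ := π) (show Measurable fun y : Euc D => (‖y - m‖₊ : ℝ≥0∞) ^ 2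
        from (measurable_id'.sub measurable_const).nnnorm.coe_nnreal_ennreal.pow_const 2)
        measurable_snd
      rw [hπ2] at this
      rw [← this, var_lintegral' hmom hm hσ2]
    have hB : ∫⁻ p : Euc D × Euc D, (‖p.1 - m‖₊ : ℝ≥0∞) ^ 2 ∂π
        = ENNReal.ofReal (2 / 3 * σ2) := by
      have := lintegral_map (μ := π) (show Measurable fun y : Euc D => (‖y - m‖₊ : ℝ≥0∞) ^ 2
        from (measurable_id'.sub measurable_const).nnnorm.coe_nnreal_ennreal.pow_const 2)
        measurable_fst
      rw [hπ1] at this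
      rw [← this, interp_lintegral hmom hm hσ2]
    set F : Euc D × Euc D → ℝ≥0∞ := fun p => (‖p.1 - p.2‖₊ : ℝ≥0∞) with hF
    set G : Euc D × Euc D → ℝ≥0∞ := fun p => (‖p.1 - m‖₊ : ℝ≥0∞) with hG
    have hFm : AEMeasurable F π :=
      ((measurable_fst.sub measurable_snd).nnnorm.coe_nnreal_ennreal).aemeasurable
    have hGm : AEMeasurable G π :=
      ((measurable_fst.sub measurable_const).nnnorm.coe_nnreal_ennreal).aemeasurable
    have mink := ENNReal.lintegral_Lp_add_le (p := (2:ℝ)) hFm hGm one_le_two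
    have e1 : ∫⁻ a, F a ^ (2:ℝ) ∂π = C := by
      simp only [conv]
      rfl
    have e2 : ∫⁻ a, G a ^ (2:ℝ) ∂π = ENNReal.ofReal (2 / 3 * σ2) := by
      simp only [conv]
      exact hB
    rw [e1, e2] at mink
    have e0 : ENNReal.ofReal σ2 ≤ ∫⁻ a, (F + G) a ^ (2:ℝ) ∂π := by
      rw [← hA]
      refine lintegral_mono fun p => ?_
      rw [conv]
      refine pow_le_pow_left' ?_ 2
      show (‖p.2 - m‖₊ : ℝ≥0∞) ≤ F p + G p
      calc (‖p.2 - m‖₊ : ℝ≥0∞) = (‖(p.2 - p.1) + (p.1 - m)‖₊ : ℝ≥0∞) := by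
            rw [sub_add_sub_cancel]
        _ ≤ ((‖p.2 - p.1‖₊ + ‖p.1 - m‖₊ : ℝ≥0) : ℝ≥0∞) :=
            ENNReal.coe_le_coe.mpr (nnnorm_add_le _ _)
        _ = F p + G p := by
            rw [ENNReal.coe_add,
              show ‖p.2 - p.1‖₊ = ‖p.1 - p.2‖₊ from by
                rw [show p.2 - p.1 = -(p.1 - p.2) from (neg_sub _ _).symm, nnnorm_neg]]
    have key : ENNReal.ofReal (Real.sqrt σ2)
        ≤ C ^ (1/2:ℝ) + ENNReal.ofReal (Real.sqrt (2 / 3 * σ2)) := by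
      have k1 := (ENNReal.rpow_le_rpow e0 (by norm_num : (0:ℝ) ≤ 1/2)).trans mink
      rwa [ENNReal.ofReal_rpow_of_nonneg hσnn (by norm_num),
        ENNReal.ofReal_rpow_of_nonneg (by positivity) (by norm_num),
        ← Real.sqrt_eq_rpow, ← Real.sqrt_eq_rpow] at k1
    have h1m : 0 ≤ 1 - Real.sqrt (2/3) :=
      sub_nonneg.mpr (Real.sqrt_le_one.mpr (by norm_num))
    have step : ENNReal.ofReal ((1 - Real.sqrt (2/3)) * Real.sqrt σ2) ≤ C ^ (1/2:ℝ) := by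
      have heq : (1 - Real.sqrt (2/3)) * Real.sqrt σ2
          = Real.sqrt σ2 - Real.sqrt (2/3 * σ2) := by
        rw [Real.sqrt_mul (by norm_num : (0:ℝ) ≤ 2/3)]
        ring
      rw [heq, ENNReal.ofReal_sub _ (Real.sqrt_nonneg _)]
      exact tsub_le_iff_right.mpr key
    calc ENNReal.ofReal ((1 - Real.sqrt (2/3)) ^ 2 * σ2)
        = (ENNReal.ofReal ((1 - Real.sqrt (2/3)) * Real.sqrt σ2)) ^ (2:ℝ) := by
          rw [ENNReal.ofReal_rpow_of_nonneg (mul_nonneg h1m (Real.sqrt_nonneg _))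
            (by norm_num)]
          congr 1
          rw [show ((1 - Real.sqrt (2/3)) * Real.sqrt σ2) ^ (2:ℝ)
              = ((1 - Real.sqrt (2/3)) * Real.sqrt σ2) ^ (2:ℕ) from by
            rw [← Real.rpow_natCast]; norm_num]
          rw [mul_pow, Real.sq_sqrt hσnn]
      _ ≤ (C ^ (1/2:ℝ)) ^ (2:ℝ) := ENNReal.rpow_le_rpow step (by norm_num)
      _ = C := by
          rw [← ENNReal.rpow_mul]
          norm_num
  · -- compact support part
    intro hcompact
    set S := msupport ν with hS
    have hnull : ν Sᶜ = 0 := msupport_compl_null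
    have hae : ∀ᵐ p ∂(ν.prod ν), p.1 ∈ S ∧ p.2 ∈ S := by
      rw [ae_iff]
      have hu : (ν.prod ν) ((Sᶜ ×ˢ (univ : Set (Euc D))) ∪ ((univ : Set (Euc D)) ×ˢ Sᶜ)) = 0 :=
        measure_union_null (by rw [Measure.prod_prod, hnull, zero_mul])
          (by rw [Measure.prod_prod, hnull, mul_zero])
      refine measure_mono_null (fun p hp => ?_) hu
      simp only [mem_setOf_eq, not_and_or] at hp
      rcases hp with h | h
      · exact Or.inl ⟨h, trivial⟩
      · exact Or.inr ⟨trivial, h⟩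
    have est : ∫⁻ p : Euc D × Euc D, (‖p.1 - p.2‖₊ : ℝ≥0∞) ^ 2 ∂(ν.prod ν)
        ≤ ENNReal.ofReal (diam S ^ 2) := by
      calc ∫⁻ p : Euc D × Euc D, (‖p.1 - p.2‖₊ : ℝ≥0∞) ^ 2 ∂(ν.prod ν)
          ≤ ∫⁻ _ : Euc D × Euc D, ENNReal.ofReal (diam S ^ 2) ∂(ν.prod ν) := by
            refine lintegral_mono_ae (hae.mono fun p hp => ?_)
            rw [ofReal_sq_norm]
            refine ENNReal.ofReal_le_ofReal (pow_le_pow_left₀ (norm_nonneg _) ?_ 2)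
            rw [← dist_eq_norm]
            exact dist_le_diam_of_mem hcompact.isBounded hp.1 hp.2
        _ = ENNReal.ofReal (diam S ^ 2) := by simp
    have h2σ : σ2 + σ2 ≤ diam S ^ 2 := by
      have := (prod_lintegral hmom hm hσ2) ▸ est
      exact (ENNReal.ofReal_le_ofReal_iff (sq_nonneg _)).mp this
    constructor
    · linarith
    · exact hub.trans (ENNReal.ofReal_le_ofReal (by linarith))
end
end
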